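/- arXiv:1905.06117 — 11 statements merged into one kernel-verified Lean document; each statement's English description precedes it below -/
import Mathlib

section
/- There is no nonlinear null curve of degree 5 in the quadric Q³: if G : Fin 5 → ℂ[X] is a null curve (i.e. G₀·G₄ − G₁² − G₂² − G₃² = 0 and G₀'·G₄' − (G₁')² − (G₂')² − (G₃')² = 0) whose components span a ℂ-subspace of ℂ[X] of dimension at least 3 and satisfy gcd(G₀,…,G₄) = 1, then max_a natDegree(G_a) ≠ 5. -/
/-!
Write `c₀, …, c₅ ∈ ℂ⁵` for the coefficient vectors of `G` and `b` for the polar form of the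
quadric. Read coefficientwise, the two null equations (the second one multiplied by `X²`) say
that on every antidiagonal `k + l = n` both `∑ b(cₖ, cₗ)` and `∑ k l b(cₖ, cₗ)` vanish. This
determines the Gram matrix of the `cₖ` up to three parameters `α, β, γ`. Six vectors in `ℂ⁵`
satisfy a relation `∑ pₖ cₖ = 0`, and `p` lies in the kernel of that Gram matrix. If `γ ≠ 0`,
then `p` is proportional to `(zᵏ)ₖ`, so all `Gₐ` vanish at `z`, against `gcd = 1`. If `γ = 0`
but `(α, β) ≠ 0`, then `p` is proportional to `e₅`, so `c₅ = 0` and the degree is below `5`.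
If `α = β = γ = 0`, the `cₖ` span a totally isotropic subspace for the nondegenerate form on
`ℂ⁵`, of dimension at most `2`, and its dimension is that of the span of the `Gₐ`.
-/

open Polynomial

/-- A tuple `G : Fin 5 → ℂ[X]` is a null curve in the quadric
`Q³ = {X₀X₄ = X₁² + X₂² + X₃²} ⊂ P⁴`. -/
def IsNullCurve (G : Fin 5 → ℂ[X]) : Prop :=
  G 0 * G 4 - G 1 ^ 2 - G 2 ^ 2 - G 3 ^ 2 = 0 ∧
  derivative (G 0) * derivative (G 4) - derivative (G 1) ^ 2 -
    derivative (G 2) ^ 2 - derivative (G 3) ^ 2 = 0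

open Module Finset Matrix

namespace LinearMap.BilinForm

variable {R M ι : Type*} [CommRing R] [AddCommGroup M] [Module R M]

def gram (B : LinearMap.BilinForm R M) (v : ι → M) : Matrix ι ι R :=
  Matrix.of fun i j => B (v i) (v j)

@[simp]
theorem gram_apply (B : LinearMap.BilinForm R M) (v : ι → M) (i j : ι) :
    B.gram v i j = B (v i) (v j) := rfl

theorem gram_mulVec [Fintype ι] (B : LinearMap.BilinForm R M) (v : ι → M) (p : ι → R) :
    B.gram v *ᵥ p = fun i => B (v i) (∑ j, p j • v j) := by
  funext i
  simp [mulVec, dotProduct, mul_comm]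

theorem span_range_le_orthogonal_of_gram_eq_zero {B : LinearMap.BilinForm R M} {v : ι → M}
    (h : B.gram v = 0) :
    Submodule.span R (Set.range v) ≤ B.orthogonal (Submodule.span R (Set.range v)) := by
  rw [Submodule.span_le]
  rintro _ ⟨i, rfl⟩ w hw
  have hker : Submodule.span R (Set.range v) ≤ LinearMap.ker (B.flip (v i)) := by
    rw [Submodule.span_le]
    rintro _ ⟨j, rfl⟩
    exact congrFun (congrFun h j) i
  exact hker hw

theorem two_mul_finrank_le_of_le_orthogonal {K V : Type*} [Field K] [AddCommGroup V]
    [Module K V] [FiniteDimensional K V] {B : LinearMap.BilinForm K V} (hB : B.Nondegenerate)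
    {W : Submodule K V} (hW : W ≤ B.orthogonal W) : 2 * finrank K W ≤ finrank K V := by
  have := Submodule.finrank_mono hW
  have := finrank_orthogonal hB W
  have := Submodule.finrank_le W
  omega

end LinearMap.BilinForm

def quadricPolar (R : Type*) [CommRing R] : LinearMap.BilinForm R (Fin 5 → R) :=
  LinearMap.mk₂ R (fun x y => x 0 * y 4 + x 4 * y 0 - 2 * (x 1 * y 1 + x 2 * y 2 + x 3 * y 3))
    (fun _ _ _ => by simp only [Pi.add_apply]; ring)
    (fun _ _ _ => by simp only [Pi.smul_apply, smul_eq_mul]; ring)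
    (fun _ _ _ => by simp only [Pi.add_apply]; ring)
    (fun _ _ _ => by simp only [Pi.smul_apply, smul_eq_mul]; ring)

section QuadricPolar

variable {R : Type*} [CommRing R]

theorem quadricPolar_apply (x y : Fin 5 → R) :
    quadricPolar R x y = x 0 * y 4 + x 4 * y 0 - 2 * (x 1 * y 1 + x 2 * y 2 + x 3 * y 3) := rfl

theorem quadricPolar_comm (x y : Fin 5 → R) : quadricPolar R x y = quadricPolar R y x := by
  simp only [quadricPolar_apply]; ring

theorem quadricPolar_nondegenerate {K : Type*} [Field K] (h2 : (2 : K) ≠ 0) :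
    (quadricPolar K).Nondegenerate := by
  refine (LinearMap.IsRefl.nondegenerate_iff_separatingLeft
    fun x y h => (quadricPolar_comm x y).symm.trans h).mpr fun x hx => ?_
  have h := fun i => hx (Pi.single i 1)
  funext i
  fin_cases i
  · simpa [quadricPolar_apply] using h 4
  · simpa [quadricPolar_apply, h2] using h 1
  · simpa [quadricPolar_apply, h2] using h 2
  · simpa [quadricPolar_apply, h2] using h 3
  · simpa [quadricPolar_apply] using h 0

end QuadricPolar

section CoeffVec

variable {R ι : Type*}

def coeffVec [Semiring R] (F : ι → R[X]) (k : ℕ) : ι → R := fun a => (F a).coeff k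

theorem coeffVec_eq_zero_of_natDegree_lt [Semiring R] {F : ι → R[X]} {k : ℕ}
    (h : ∀ a, (F a).natDegree < k) : coeffVec F k = 0 :=
  funext fun a => coeff_eq_zero_of_natDegree_lt (h a)

theorem sum_pow_smul_coeffVec [CommSemiring R] {F : ι → R[X]} {n : ℕ}
    (h : ∀ a, (F a).natDegree < n) (z : R) :
    ∑ k : Fin n, z ^ (k : ℕ) • coeffVec F k = fun a => (F a).eval z := by
  funext a
  rw [eval_eq_sum_range' (h a), ← Fin.sum_univ_eq_sum_range]
  simp [coeffVec, mul_comm]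

theorem eval_eq_zero_of_sum_smul_coeffVec_eq_zero {K : Type*} [Field K] {F : ι → K[X]}
    {n : ℕ} (hdeg : ∀ a, (F a).natDegree < n) {c z : K} (hc : c ≠ 0)
    (h : ∑ k : Fin n, (c * z ^ (k : ℕ)) • coeffVec F k = 0) (a : ι) : (F a).eval z = 0 := by
  simp only [mul_smul, ← Finset.smul_sum, sum_pow_smul_coeffVec hdeg, smul_eq_zero, hc,
    false_or] at h
  exact congrFun h a

theorem sup_natDegree_ne_of_coeffVec_eq_zero [Semiring R] [Fintype ι] [Nonempty ι]
    {F : ι → R[X]} {n : ℕ} (hn : n ≠ 0) (h : coeffVec F n = 0) :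
    univ.sup (fun a => (F a).natDegree) ≠ n := by
  obtain ⟨a, -, ha⟩ := exists_mem_eq_sup univ univ_nonempty fun a => (F a).natDegree
  rw [ha]
  exact fun hd => coeff_ne_zero_of_eq_degree
    ((degree_eq_iff_natDegree_eq_of_pos (Nat.pos_of_ne_zero hn)).mpr hd) (congrFun h a)

theorem gcd_ne_one_of_forall_isRoot {K : Type*} [Field K] [DecidableEq K] {s : Finset ι}
    {F : ι → K[X]} {z : K} (h : ∀ a ∈ s, (F a).IsRoot z) : s.gcd F ≠ 1 := fun h1 =>
  not_isUnit_X_sub_C z <| isUnit_of_dvd_one <|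
    h1 ▸ dvd_gcd fun a ha => dvd_iff_isRoot.mpr (h a ha)

theorem finrank_span_range_le_finrank_span_coeffVec {K : Type*} [Field K] [Fintype ι]
    {F : ι → K[X]} {n : ℕ} (h : ∀ a, (F a).natDegree < n) :
    finrank K (Submodule.span K (Set.range F)) ≤
      finrank K (Submodule.span K (Set.range fun k : Fin n => coeffVec F k)) := by
  let trunc : K[X] →ₗ[K] Fin n → K := LinearMap.pi fun k => lcoeff K k
  have hlt : ∀ f ∈ Submodule.span K (Set.range F), f.degree < n := by
    intro f hf
    refine mem_degreeLT.mp (Submodule.span_le.mpr ?_ hf)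
    rintro _ ⟨a, rfl⟩
    exact mem_degreeLT.mpr ((degree_le_natDegree).trans_lt (by exact_mod_cast h a))
  have hinj : Set.InjOn trunc (Submodule.span K (Set.range F)) := by
    intro f hf g hg hfg
    ext m
    by_cases hm : m < n
    · exact congrFun hfg ⟨m, hm⟩
    · have hmn : (n : WithBot ℕ) ≤ m := by exact_mod_cast not_lt.mp hm
      rw [coeff_eq_zero_of_degree_lt ((hlt f hf).trans_le hmn),
        coeff_eq_zero_of_degree_lt ((hlt g hg).trans_le hmn)]
  let C : Matrix (Fin n) ι K := Matrix.of fun k a => (F a).coeff k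
  calc finrank K (Submodule.span K (Set.range F))
      ≤ finrank K ((Submodule.span K (Set.range F)).map trunc) :=
        LinearMap.finrank_le_finrank_of_injective
          (LinearMap.submoduleMap_injective_of_injOn hinj)
    _ = C.rank := by
        rw [rank_eq_finrank_span_cols, Submodule.map_span, ← Set.range_comp]
        rfl
    _ = _ := rank_eq_finrank_span_row C

theorem coeff_quadricPolar [CommRing R] (F H : Fin 5 → R[X]) (n : ℕ) :
    (quadricPolar R[X] F H).coeff n =
      ∑ x ∈ antidiagonal n, quadricPolar R (coeffVec F x.1) (coeffVec H x.2) := by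
  simp only [quadricPolar_apply, coeffVec, coeff_sub, coeff_add, coeff_ofNat_mul, coeff_mul,
    mul_add, Finset.mul_sum, Finset.sum_add_distrib, Finset.sum_sub_distrib]

theorem coeff_X_mul_derivative [CommRing R] (p : R[X]) (n : ℕ) :
    (X * derivative p).coeff n = n * p.coeff n := by
  cases n with
  | zero => simp
  | succ n => rw [coeff_X_mul, coeff_derivative]; push_cast; ring

theorem coeffVec_X_mul_derivative [CommRing R] (F : ι → R[X]) (k : ℕ) :
    coeffVec (fun a => X * derivative (F a)) k = (k : R) • coeffVec F k := by
  funext a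
  simp [coeffVec, coeff_X_mul_derivative]

end CoeffVec

theorem finrank_span_range_le_two_of_gram_eq_zero {K : Type*} [Field K] (h2 : (2 : K) ≠ 0)
    {F : Fin 5 → K[X]} {n : ℕ} (hdeg : ∀ a, (F a).natDegree < n)
    (h : (quadricPolar K).gram (fun k : Fin n => coeffVec F k) = 0) :
    finrank K (Submodule.span K (Set.range F)) ≤ 2 := by
  have hiso := LinearMap.BilinForm.two_mul_finrank_le_of_le_orthogonal
    (quadricPolar_nondegenerate h2) (LinearMap.BilinForm.span_range_le_orthogonal_of_gram_eq_zero h)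
  rw [finrank_fin_fun] at hiso
  have := finrank_span_range_le_finrank_span_coeffVec hdeg
  omega

def nullGram {R : Type*} [Ring R] (α β γ : R) : Matrix (Fin 6) (Fin 6) R :=
  !![0, 0, 0, 0, α, β;
     0, 0, 0, -4 * α, -3 * β, γ;
     0, 0, 6 * α, 2 * β, -4 * γ, 0;
     0, -4 * α, 2 * β, 6 * γ, 0, 0;
     α, -3 * β, -4 * γ, 0, 0, 0;
     β, γ, 0, 0, 0, 0]

section NullGram

@[simp]
theorem nullGram_zero {R : Type*} [Ring R] : nullGram (0 : R) 0 0 = 0 := by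
  ext i j
  fin_cases i <;> fin_cases j <;> simp [nullGram]

theorem smul_nullGram {R : Type*} [CommRing R] (c α β γ : R) :
    c • nullGram α β γ = nullGram (c * α) (c * β) (c * γ) := by
  ext i j
  fin_cases i <;> fin_cases j <;> simp [nullGram] <;> ring

theorem nullGram_mulVec {R : Type*} [CommRing R] (α β γ : R) (p : Fin 6 → R) :
    nullGram α β γ *ᵥ p = ![α * p 4 + β * p 5, -4 * α * p 3 - 3 * β * p 4 + γ * p 5,
      6 * α * p 2 + 2 * β * p 3 - 4 * γ * p 4, -4 * α * p 1 + 2 * β * p 2 + 6 * γ * p 3,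
      α * p 0 - 3 * β * p 1 - 4 * γ * p 2, β * p 0 + γ * p 1] := by
  funext i
  fin_cases i <;> simp [nullGram, Matrix.mulVec, dotProduct, Fin.sum_univ_six] <;> ring

theorem nullGram_mulVec_eq_zero_iff {R : Type*} [CommRing R] {α β γ : R} {p : Fin 6 → R} :
    nullGram α β γ *ᵥ p = 0 ↔
      α * p 4 + β * p 5 = 0 ∧ -4 * α * p 3 - 3 * β * p 4 + γ * p 5 = 0 ∧
      6 * α * p 2 + 2 * β * p 3 - 4 * γ * p 4 = 0 ∧
      -4 * α * p 1 + 2 * β * p 2 + 6 * γ * p 3 = 0 ∧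
      α * p 0 - 3 * β * p 1 - 4 * γ * p 2 = 0 ∧ β * p 0 + γ * p 1 = 0 := by
  rw [nullGram_mulVec]
  refine ⟨fun h => ⟨congrFun h 0, congrFun h 1, congrFun h 2, congrFun h 3, congrFun h 4,
    congrFun h 5⟩, fun h => ?_⟩
  funext i
  fin_cases i
  exacts [h.1, h.2.1, h.2.2.1, h.2.2.2.1, h.2.2.2.2.1, h.2.2.2.2.2]

variable {K : Type*} [Field K] [CharZero K]

theorem eq_nullGram_of_sum_antidiagonal {b : ℕ → ℕ → K}
    (hsymm : ∀ i j, b i j = b j i) (hvanish : ∀ i j, 5 < i → b i j = 0)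
    (hS : ∀ n : ℕ, ∑ x ∈ antidiagonal n, b x.1 x.2 = 0)
    (hT : ∀ n : ℕ, ∑ x ∈ antidiagonal n, ((x.1 : K) * x.2) * b x.1 x.2 = 0) (i j : Fin 6) :
    b i j = nullGram (b 0 4) (b 0 5) (b 1 5) i j := by
  -- On the antidiagonal `k + l = n` the two relations leave one free entry for `n = 4, 5, 6`
  -- and none otherwise.
  have hsymm' : ∀ i j, j < i → b i j = b j i := fun i j _ => hsymm i j
  have hvanish' : ∀ i j, 5 < j → b i j = 0 := fun i j h => hsymm i j ▸ hvanish j i h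
  have S0 := hS 0; have S1 := hS 1; have S2 := hS 2; have S3 := hS 3; have S4 := hS 4
  have S5 := hS 5; have S6 := hS 6; have S7 := hS 7; have S8 := hS 8; have S9 := hS 9
  have S10 := hS 10
  have T2 := hT 2; have T3 := hT 3; have T4 := hT 4; have T5 := hT 5; have T6 := hT 6
  have T7 := hT 7; have T8 := hT 8
  simp only [Finset.Nat.sum_antidiagonal_eq_sum_range_succ_mk, Finset.sum_range_succ,
    Finset.sum_range_zero] at S0 S1 S2 S3 S4 S5 S6 S7 S8 S9 S10 T2 T3 T4 T5 T6 T7 T8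
  norm_num [hvanish, hvanish'] at S0 S1 S2 S3 S4 S5 S6 S7 S8 S9 S10 T2 T3 T4 T5 T6 T7 T8
  simp (disch := decide) only [hsymm'] at S0 S1 S2 S3 S4 S5 S6 S7 S8 S9 S10 T2 T3 T4 T5 T6 T7 T8
  have h01 : b 0 1 = 0 := by linear_combination S1 / 2
  have h02 : b 0 2 = 0 := by linear_combination (S2 - T2) / 2
  have h12 : b 1 2 = 0 := by linear_combination T3 / 4
  have h03 : b 0 3 = 0 := by linear_combination S3 / 2 - T3 / 4
  have h13 : b 1 3 = -4 * b 0 4 := by linear_combination 2 * S4 - T4 / 2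
  have h22 : b 2 2 = 6 * b 0 4 := by linear_combination T4 - 3 * S4
  have h14 : b 1 4 = -3 * b 0 5 := by linear_combination 3 / 2 * S5 - T5 / 4
  have h23 : b 2 3 = 2 * b 0 5 := by linear_combination T5 / 4 - S5
  have h24 : b 2 4 = -4 * b 1 5 := by linear_combination 9 / 2 * S6 - T6 / 2
  have h33 : b 3 3 = 6 * b 1 5 := by linear_combination T6 - 8 * S6
  have h25 : b 2 5 = 0 := by linear_combination 3 * S7 - T7 / 4
  have h34 : b 3 4 = 0 := by linear_combination T7 / 4 - 5 / 2 * S7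
  have h35 : b 3 5 = 0 := by linear_combination 8 * S8 - T8 / 2
  have h44 : b 4 4 = 0 := by linear_combination T8 - 15 * S8
  have h45 : b 4 5 = 0 := by linear_combination S9 / 2
  fin_cases i <;> fin_cases j <;>
    simp (disch := decide) [nullGram, hsymm', S0, S10, T2, h01, h02, h12, h03, h13, h22, h14,
      h23, h24, h33, h25, h34, h35, h44, h45]

theorem eq_smul_moment_of_nullGram_one_mulVec_eq_zero {z t : K} {p : Fin 6 → K}
    (hp : nullGram (z ^ 2 + t) (-z) 1 *ᵥ p = 0) : p = p 0 • fun k : Fin 6 => z ^ (k : ℕ) := by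
  obtain ⟨R0, R1, R2, R3, R4, R5⟩ := nullGram_mulVec_eq_zero_iff.mp hp
  -- Solving the rows bottom-up expresses `p` through `p 0`; the top row is then `t³ p₀ = 0`.
  have e1 : p 1 = z * p 0 := by linear_combination R5
  have e2 : p 2 = (z ^ 2 + t / 4) * p 0 := by
    linear_combination (-1/4) * R4 + (3 * z / 4) * e1
  have e3 : p 3 = (z ^ 3 + 3 / 4 * t * z) * p 0 := by
    linear_combination (1/6) * R3 + (2/3) * (z ^ 2 + t) * e1 + (z / 3) * e2
  have e4 : p 4 = (z ^ 4 + 3 / 2 * t * z ^ 2 + 3 / 8 * t ^ 2) * p 0 := by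
    linear_combination (-1/4) * R2 + (3/2) * (z ^ 2 + t) * e2 - (z / 2) * e3
  have e5 : p 5 = (z ^ 5 + 5 / 2 * t * z ^ 3 + 15 / 8 * t ^ 2 * z) * p 0 := by
    linear_combination R1 + 4 * (z ^ 2 + t) * e3 - 3 * z * e4
  have ht : t * p 0 = 0 := by
    have : (t * p 0) ^ 3 = 0 := by
      linear_combination (8/3) * p 0 ^ 2 * (R0 - (z ^ 2 + t) * e4 + z * e5)
    exact pow_eq_zero_iff (by norm_num) |>.mp this
  funext k
  fin_cases k
  · show p 0 = p 0 * z ^ 0; ring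
  · show p 1 = p 0 * z ^ 1; linear_combination e1
  · show p 2 = p 0 * z ^ 2; linear_combination e2 + (1/4) * ht
  · show p 3 = p 0 * z ^ 3; linear_combination e3 + (3/4 * z) * ht
  · show p 4 = p 0 * z ^ 4; linear_combination e4 + (3/2 * z ^ 2 + 3/8 * t) * ht
  · show p 5 = p 0 * z ^ 5; linear_combination e5 + (5/2 * z ^ 3 + 15/8 * t * z) * ht

theorem eq_smul_moment_of_nullGram_mulVec_eq_zero {α β γ : K} (hγ : γ ≠ 0) {p : Fin 6 → K}
    (hp : nullGram α β γ *ᵥ p = 0) : p = p 0 • fun k : Fin 6 => (-β / γ) ^ (k : ℕ) := by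
  refine eq_smul_moment_of_nullGram_one_mulVec_eq_zero (t := α / γ - (-β / γ) ^ 2) ?_
  have hM : nullGram α β γ =
      γ • nullGram ((-β / γ) ^ 2 + (α / γ - (-β / γ) ^ 2)) (-(-β / γ)) 1 := by
    rw [smul_nullGram]
    congr 1 <;> field_simp
    ring
  rw [hM, Matrix.smul_mulVec] at hp
  exact (smul_eq_zero.mp hp).resolve_left hγ

theorem eq_smul_single_of_nullGram_mulVec_eq_zero {α β : K} (hαβ : α ≠ 0 ∨ β ≠ 0)
    {p : Fin 6 → K} (hp : nullGram α β 0 *ᵥ p = 0) : p = p 5 • Pi.single 5 1 := by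
  obtain ⟨R0, R1, R2, R3, R4, R5⟩ := nullGram_mulVec_eq_zero_iff.mp hp
  have hlow : p 0 = 0 ∧ p 1 = 0 ∧ p 2 = 0 ∧ p 3 = 0 ∧ p 4 = 0 := by
    by_cases hβ : β = 0
    · have hα := hαβ.resolve_right (not_not.mpr hβ)
      subst hβ
      simp_all
    · have h0 : p 0 = 0 := by simpa [hβ] using R5
      have h1 : p 1 = 0 := by simpa [h0, hβ] using R4
      have h2 : p 2 = 0 := by simpa [h1, hβ] using R3
      have h3 : p 3 = 0 := by simpa [h2, hβ] using R2
      have h4 : p 4 = 0 := by simpa [h3, hβ] using R1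
      exact ⟨h0, h1, h2, h3, h4⟩
  obtain ⟨h0, h1, h2, h3, h4⟩ := hlow
  funext k
  fin_cases k <;> simp [h0, h1, h2, h3, h4]

end NullGram

theorem IsNullCurve.sum_antidiagonal_quadricPolar {G : Fin 5 → ℂ[X]} (hG : IsNullCurve G)
    (n : ℕ) :
    ∑ x ∈ antidiagonal n, quadricPolar ℂ (coeffVec G x.1) (coeffVec G x.2) = 0 ∧
      ∑ x ∈ antidiagonal n,
        (x.1 * x.2 : ℂ) * quadricPolar ℂ (coeffVec G x.1) (coeffVec G x.2) = 0 := by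
  have h₀ : quadricPolar ℂ[X] G G = 0 := by
    rw [quadricPolar_apply]; linear_combination 2 * hG.1
  have h₁ : quadricPolar ℂ[X] (fun a => X * derivative (G a)) (fun a => X * derivative (G a))
      = 0 := by
    rw [quadricPolar_apply]; linear_combination 2 * X ^ 2 * hG.2
  constructor
  · rw [← coeff_quadricPolar, h₀, coeff_zero]
  · rw [← coeff_zero (R := ℂ) n, ← h₁, coeff_quadricPolar]
    refine Finset.sum_congr rfl fun x _ => ?_
    simp only [coeffVec_X_mul_derivative, map_smul, LinearMap.smul_apply, smul_eq_mul]
    ring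

theorem IsNullCurve.gram_coeffVec {G : Fin 5 → ℂ[X]} (hG : IsNullCurve G)
    (hdeg : ∀ a, (G a).natDegree < 6) :
    (quadricPolar ℂ).gram (fun k : Fin 6 => coeffVec G k) =
      nullGram (quadricPolar ℂ (coeffVec G 0) (coeffVec G 4))
        (quadricPolar ℂ (coeffVec G 0) (coeffVec G 5))
        (quadricPolar ℂ (coeffVec G 1) (coeffVec G 5)) := by
  ext i j
  rw [LinearMap.BilinForm.gram_apply]
  refine eq_nullGram_of_sum_antidiagonal
    (b := fun i j => quadricPolar ℂ (coeffVec G i) (coeffVec G j))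
    (fun _ _ => quadricPolar_comm _ _) (fun i _ hi => ?_)
    (fun n => (hG.sum_antidiagonal_quadricPolar n).1)
    (fun n => (hG.sum_antidiagonal_quadricPolar n).2) i j
  rw [coeffVec_eq_zero_of_natDegree_lt fun a => (hdeg a).trans_le hi, map_zero,
    LinearMap.zero_apply]

theorem IsNullCurve.exists_nullGram_mulVec_eq_zero {G : Fin 5 → ℂ[X]} (hG : IsNullCurve G)
    (hdeg : ∀ a, (G a).natDegree < 6) :
    ∃ p : Fin 6 → ℂ, p ≠ 0 ∧ ∑ k, p k • coeffVec G k = 0 ∧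
      nullGram (quadricPolar ℂ (coeffVec G 0) (coeffVec G 4))
        (quadricPolar ℂ (coeffVec G 0) (coeffVec G 5))
        (quadricPolar ℂ (coeffVec G 1) (coeffVec G 5)) *ᵥ p = 0 := by
  obtain ⟨p, hp, k, hk⟩ := Fintype.not_linearIndependent_iff.mp
    fun h : LinearIndependent ℂ (fun k : Fin 6 => coeffVec G k) => by
      simpa using h.fintype_card_le_finrank
  refine ⟨p, fun h => hk (congrFun h k), hp, ?_⟩
  rw [← hG.gram_coeffVec hdeg, LinearMap.BilinForm.gram_mulVec, hp]
  simp only [map_zero]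
  rfl

/-- There is no nonlinear null curve of degree `5` in `Q³`. -/
theorem no_nonlinear_null_curve_of_degree_five (G : Fin 5 → ℂ[X])
    (hnull : IsNullCurve G)
    (hgcd : Finset.univ.gcd G = 1)
    (hspan : 3 ≤ Module.finrank ℂ ↥(Submodule.span ℂ (Set.range G))) :
    Finset.univ.sup (fun a => (G a).natDegree) ≠ 5 := by
  intro h5
  have hdeg : ∀ a, (G a).natDegree < 6 := fun a =>
    Nat.lt_succ_of_le (h5 ▸ le_sup (f := fun a => (G a).natDegree) (mem_univ a))
  have hgram := hnull.gram_coeffVec hdeg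
  obtain ⟨p, hp0, hp, hker⟩ := hnull.exists_nullGram_mulVec_eq_zero hdeg
  set α := quadricPolar ℂ (coeffVec G 0) (coeffVec G 4)
  set β := quadricPolar ℂ (coeffVec G 0) (coeffVec G 5)
  set γ := quadricPolar ℂ (coeffVec G 1) (coeffVec G 5)
  rcases ne_or_eq γ 0 with hγ | hγ
  · have hp' := eq_smul_moment_of_nullGram_mulVec_eq_zero hγ hker
    have hroot : ∀ a, (G a).IsRoot (-β / γ) :=
      eval_eq_zero_of_sum_smul_coeffVec_eq_zero hdeg (left_ne_zero_of_smul (hp' ▸ hp0))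
        (by rw [hp'] at hp; simpa using hp)
    exact gcd_ne_one_of_forall_isRoot (fun a _ => hroot a) hgcd
  by_cases hαβ : α = 0 ∧ β = 0
  · have := finrank_span_range_le_two_of_gram_eq_zero two_ne_zero hdeg
      (by rw [hgram, hαβ.1, hαβ.2, hγ, nullGram_zero])
    omega
  have hp' := eq_smul_single_of_nullGram_mulVec_eq_zero (not_and_or.mp hαβ) (hγ ▸ hker)
  have hc5 : coeffVec G 5 = 0 := by
    rw [hp'] at hp
    simpa [Pi.single_apply, left_ne_zero_of_smul (hp' ▸ hp0)] using hp
  exact sup_natDegree_ne_of_coeffVec_eq_zero (by norm_num) hc5 h5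
end

section
/- Every nonlinear null curve in Q³ has degree at least 4 (in particular there are no nonlinear null curves of degree 2 or 3), and every nonlinear null curve of degree exactly 4 is unbranched: if G : Fin 5 → ℂ[X] is a null curve with gcd(G₀,…,G₄) = 1 whose components span a ℂ-subspace of dimension at least 3, then d := max_a natDegree(G_a) ≥ 4; moreover if d = 4 then the ten minors G_a·G_b' − G_b·G_a' have gcd 1 and maximal degree 6. -/
open Polynomial

/-- The set of ordered index pairs `a < b` in `Fin 5`. -/
def pairs5 : Finset (Fin 5 × Fin 5) := Finset.univ.filter (fun p => p.1 < p.2)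

/-- The minor `G_a·G_b' − G_b·G_a'`. -/
noncomputable def minor5 (G : Fin 5 → ℂ[X]) (p : Fin 5 × Fin 5) : ℂ[X] :=
  G p.1 * derivative (G p.2) - G p.2 * derivative (G p.1)

/-!
Write `B` for the polar form of the quadric and `G⁽ʲ⁾` for the derivatives of `G`. When all
components have degree at most 4, differentiating `B(G, G) = 0` and `B(G', G') = 0` repeatedly
shows that the Gram matrix `B(G⁽ʲ⁾, G⁽ᵏ⁾)`, `j, k ≤ 4`, vanishes off the antidiagonal, which reads
`ρ, -ρ, ρ, -ρ, ρ` for a constant `ρ`. If `ρ = 0`, the coefficient vectors of `G` span a totally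
isotropic subspace of a nondegenerate form in dimension 5, so at most a plane, and then so do the
components of `G`. Hence a nonlinear curve has `ρ ≠ 0`, which already rules out degree `≤ 3`,
where `G⁗ = 0`. In degree 4, pairing with `G'''(t)` shows that `G(t)` and `G'(t)` are
independent for every `t`, so the minors have no common zero; pairing with the constant
coefficient vector shows that the top coefficient vectors `c₃, c₄` of `G` are independent, so some
minor has degree 6.
-/

namespace NullCurve

section QuadricForm

variable (R : Type*) [CommRing R]

def quadricForm : LinearMap.BilinForm R (Fin 5 → R) :=
  LinearMap.mk₂ R (fun u v => u 0 * v 4 + u 4 * v 0 - 2 * (u 1 * v 1 + u 2 * v 2 + u 3 * v 3))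
    (fun _ _ _ => by simp only [Pi.add_apply]; ring)
    (fun _ _ _ => by simp only [Pi.smul_apply, smul_eq_mul]; ring)
    (fun _ _ _ => by simp only [Pi.add_apply]; ring)
    (fun _ _ _ => by simp only [Pi.smul_apply, smul_eq_mul]; ring)

variable {R}

@[simp]
lemma quadricForm_apply (u v : Fin 5 → R) :
    quadricForm R u v = u 0 * v 4 + u 4 * v 0 - 2 * (u 1 * v 1 + u 2 * v 2 + u 3 * v 3) :=
  rfl

lemma quadricForm_comm (u v : Fin 5 → R) : quadricForm R u v = quadricForm R v u := by
  simp only [quadricForm_apply]; ring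

lemma quadricForm_self (u : Fin 5 → R) :
    quadricForm R u u = 2 * (u 0 * u 4 - u 1 ^ 2 - u 2 ^ 2 - u 3 ^ 2) := by
  simp only [quadricForm_apply]; ring

lemma map_quadricForm {S : Type*} [CommRing S] (f : R →+* S) (u v : Fin 5 → R) :
    f (quadricForm R u v) = quadricForm S (f ∘ u) (f ∘ v) := by
  simp [map_ofNat]

lemma derivative_quadricForm (u v : Fin 5 → R[X]) :
    derivative (quadricForm R[X] u v) =
      quadricForm R[X] (derivative ∘ u) v + quadricForm R[X] u (derivative ∘ v) := by
  simp only [quadricForm_apply, Function.comp_apply, derivative_sub, derivative_add,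
    derivative_mul, derivative_ofNat]
  ring

end QuadricForm

section Isotropic

variable {K : Type*} [Field K]

lemma quadricForm_nondegenerate (h2 : (2 : K) ≠ 0) : (quadricForm K).Nondegenerate := by
  refine LinearMap.BilinForm.Nondegenerate.ofSeparatingLeft fun x hx => funext fun i => ?_
  fin_cases i
  · simpa using hx (Pi.single 4 1)
  · simpa [h2] using hx (Pi.single 1 1)
  · simpa [h2] using hx (Pi.single 2 1)
  · simpa [h2] using hx (Pi.single 3 1)
  · simpa using hx (Pi.single 0 1)

lemma finrank_span_le_two_of_isotropic (h2 : (2 : K) ≠ 0) {ι : Type*} (c : ι → Fin 5 → K)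
    (hc : ∀ i j, quadricForm K (c i) (c j) = 0) :
    Module.finrank K (Submodule.span K (Set.range c)) ≤ 2 := by
  set W := Submodule.span K (Set.range c)
  have hW : W ≤ (quadricForm K).orthogonal W := by
    refine Submodule.span_le.mpr (Set.range_subset_iff.mpr fun i y hy => ?_)
    have : W ≤ LinearMap.ker ((quadricForm K).flip (c i)) :=
      Submodule.span_le.mpr (Set.range_subset_iff.mpr fun j => hc j i)
    exact this hy
  have := Submodule.finrank_mono hW
  rw [LinearMap.BilinForm.finrank_orthogonal (quadricForm_nondegenerate h2),
    Module.finrank_fin_fun] at this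
  omega

end Isotropic

lemma finrank_span_le_finrank_span_coeff {K ι : Type*} [Field K] [Fintype ι] (G : ι → K[X])
    {n : ℕ} (hG : ∀ a, (G a).natDegree < n) :
    Module.finrank K (Submodule.span K (Set.range G)) ≤
      Module.finrank K (Submodule.span K (Set.range fun j : Fin n => fun a => (G a).coeff j)) := by
  let M : Matrix ι (Fin n) K := fun a j => (G a).coeff j
  let φ := Fintype.linearCombination K fun j : Fin n => (X : K[X]) ^ (j : ℕ)
  have hφ : ∀ a, φ (M a) = G a := fun a => by
    conv_rhs => rw [(G a).as_sum_range' n (hG a), ← Fin.sum_univ_eq_sum_range]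
    simp [φ, M, Fintype.linearCombination_apply, smul_eq_C_mul, C_mul_X_pow_eq_monomial]
  calc Module.finrank K (Submodule.span K (Set.range G))
      = Module.finrank K ((Submodule.span K (Set.range M)).map φ) := by
        rw [Submodule.map_span, ← Set.range_comp, show ⇑φ ∘ M = G from funext hφ]
    _ ≤ M.rank := by
        rw [Matrix.rank_eq_finrank_span_row]
        exact Submodule.finrank_map_le φ _
    _ = _ := Matrix.rank_eq_finrank_span_cols M

section DerivGram

variable {R : Type*} [CommRing R]

noncomputable def derivGram (G : Fin 5 → R[X]) (j k : ℕ) : R[X] :=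
  quadricForm R[X] (fun a => derivative^[j] (G a)) (fun a => derivative^[k] (G a))

variable (G : Fin 5 → R[X])

lemma derivGram_comm (j k : ℕ) : derivGram G j k = derivGram G k j :=
  quadricForm_comm _ _

lemma derivative_derivGram (j k : ℕ) :
    derivative (derivGram G j k) = derivGram G (j + 1) k + derivGram G j (k + 1) := by
  simp only [derivGram, derivative_quadricForm, Function.comp_def,
    ← Function.iterate_succ_apply' derivative]

lemma derivGram_eq_zero_of_natDegree_le {n : ℕ} (hG : ∀ a, (G a).natDegree ≤ n) (j : ℕ)
    {k : ℕ} (hk : n < k) : derivGram G j k = 0 := by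
  have : (fun a => derivative^[k] (G a)) = 0 :=
    funext fun a => iterate_derivative_eq_zero ((hG a).trans_lt hk)
  rw [derivGram, this, map_zero]

lemma eval_derivGram (t : R) (j k : ℕ) :
    (derivGram G j k).eval t = quadricForm R (fun a => (derivative^[j] (G a)).eval t)
      (fun a => (derivative^[k] (G a)).eval t) :=
  map_quadricForm (evalRingHom t) _ _

lemma eval_zero_derivGram (j k : ℕ) :
    (derivGram G j k).eval 0 = (j.factorial * k.factorial : R) *
      quadricForm R (fun a => (G a).coeff j) (fun a => (G a).coeff k) := by
  have hcoeff : ∀ i a, (derivative^[i] (G a)).eval 0 = i.factorial * (G a).coeff i := by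
    intro i a
    rw [← coeff_zero_eq_eval_zero, coeff_iterate_derivative, zero_add, Nat.descFactorial_self,
      nsmul_eq_mul]
  simp only [eval_derivGram, hcoeff, quadricForm_apply]
  ring

end DerivGram

variable {K : Type*} [Field K]

lemma exists_eq_antidiagonal_of_derivative [CharZero K] {g : ℕ → ℕ → K[X]}
    (hsymm : ∀ j k, g j k = g k j)
    (hderiv : ∀ j k, derivative (g j k) = g (j + 1) k + g j (k + 1)) (htop : ∀ j, g j 5 = 0)
    (h00 : g 0 0 = 0) (h11 : g 1 1 = 0) :
    ∃ ρ : K, ∀ j k, j ≤ 4 → k ≤ 4 → g j k = C (if j + k = 4 then (-1) ^ j * ρ else 0) := by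
  have step : ∀ {j k}, g j k = 0 → g (j + 1) k + g j (k + 1) = 0 := fun h => by
    rw [← hderiv, h, derivative_zero]
  have g01 : g 0 1 = 0 := (mul_eq_zero.mp (show (2 : K[X]) * g 0 1 = 0 by
    linear_combination (norm := ring_nf) step h00 - hsymm 1 0)).resolve_left two_ne_zero
  have g12 : g 1 2 = 0 := (mul_eq_zero.mp (show (2 : K[X]) * g 1 2 = 0 by
    linear_combination (norm := ring_nf) step h11 - hsymm 2 1)).resolve_left two_ne_zero
  have g02 : g 0 2 = 0 := by linear_combination (norm := ring_nf) step g01 - h11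
  have g03 : g 0 3 = 0 := by linear_combination (norm := ring_nf) step g02 - g12
  have g13 : g 1 3 = -g 2 2 := by linear_combination (norm := ring_nf) step g12
  have g04 : g 0 4 = g 2 2 := by linear_combination (norm := ring_nf) step g03 - g13
  have dg13 : derivative (g 1 3) = -derivative (g 2 2) := by rw [g13, derivative_neg]
  have dg04 : derivative (g 0 4) = derivative (g 2 2) := by rw [g04]
  -- `g₁₄ = g₀₄' = g₂₂' = 2 g₂₃` and `g₂₃ + g₁₄ = g₁₃' = -g₂₂' = -2 g₂₃`
  have g23 : g 2 3 = 0 := (mul_eq_zero.mp (show (5 : K[X]) * g 2 3 = 0 by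
    linear_combination (norm := ring_nf) -2 * hderiv 2 2 - hderiv 1 3 + hderiv 0 4 + dg13 - dg04
      - 2 * hsymm 3 2 + htop 0)).resolve_left (by exact_mod_cast (by norm_num : (5 : K) ≠ 0))
  have dg22 : derivative (g 2 2) = 0 := by
    linear_combination (norm := ring_nf) hderiv 2 2 + hsymm 3 2 + 2 * g23
  have g14 : g 1 4 = 0 := by
    linear_combination (norm := ring_nf) -hderiv 0 4 + dg04 + dg22 - htop 0
  have g24 : g 2 4 = 0 := by linear_combination (norm := ring_nf) step g14 - htop 1
  have g33 : g 3 3 = 0 := by linear_combination (norm := ring_nf) step g23 - g24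
  have g34 : g 3 4 = 0 := by linear_combination (norm := ring_nf) step g24 - htop 2
  have g44 : g 4 4 = 0 := by linear_combination (norm := ring_nf) step g34 - htop 3
  have g22 : g 2 2 = C ((g 2 2).coeff 0) := eq_C_of_derivative_eq_zero dg22
  rw [g22] at g13 g04
  refine ⟨(g 2 2).coeff 0, fun j k hj hk => ?_⟩
  interval_cases j <;> interval_cases k <;> norm_num <;>
    first | assumption | (rw [hsymm]; assumption)

def IsNullGram (G : Fin 5 → K[X]) (ρ : K) : Prop :=
  ∀ j k, j ≤ 4 → k ≤ 4 → derivGram G j k = C (if j + k = 4 then (-1) ^ j * ρ else 0)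

namespace IsNullGram

variable {G : Fin 5 → K[X]} {ρ : K}

lemma quadricForm_eval (h : IsNullGram G ρ) (t : K) {j k : ℕ} (hj : j ≤ 4) (hk : k ≤ 4) :
    quadricForm K (fun a => (derivative^[j] (G a)).eval t)
      (fun a => (derivative^[k] (G a)).eval t) = if j + k = 4 then (-1) ^ j * ρ else 0 := by
  rw [← eval_derivGram, h j k hj hk, eval_C]

lemma factorial_mul_quadricForm_coeff (h : IsNullGram G ρ) {j k : ℕ} (hj : j ≤ 4) (hk : k ≤ 4) :
    (j.factorial * k.factorial : K) *
        quadricForm K (fun a => (G a).coeff j) (fun a => (G a).coeff k) =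
      if j + k = 4 then (-1) ^ j * ρ else 0 := by
  rw [← eval_zero_derivGram, h j k hj hk, eval_C]

lemma quadricForm_coeff_eq_zero [CharZero K] (h : IsNullGram G ρ) {j k : ℕ} (hj : j ≤ 4)
    (hk : k ≤ 4) (hjk : j + k ≠ 4 ∨ ρ = 0) :
    quadricForm K (fun a => (G a).coeff j) (fun a => (G a).coeff k) = 0 := by
  have hrhs : (if j + k = 4 then (-1) ^ j * ρ else 0) = 0 := by
    rcases hjk with hjk | rfl
    · exact if_neg hjk
    · simp
  have := h.factorial_mul_quadricForm_coeff hj hk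
  rw [hrhs] at this
  exact (mul_eq_zero.mp this).resolve_left
    (by exact_mod_cast (Nat.mul_pos j.factorial_pos k.factorial_pos).ne')

lemma quadricForm_coeff_ne_zero (h : IsNullGram G ρ) (hρ : ρ ≠ 0) {j k : ℕ} (hj : j ≤ 4)
    (hjk : j + k = 4) :
    quadricForm K (fun a => (G a).coeff j) (fun a => (G a).coeff k) ≠ 0 := by
  intro h0
  have := h.factorial_mul_quadricForm_coeff hj (k := k) (by omega)
  rw [h0, mul_zero, if_pos hjk] at this
  exact hρ ((mul_eq_zero.mp this.symm).resolve_left (pow_ne_zero _ (by norm_num)))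

lemma finrank_span_le_two [CharZero K] (h : IsNullGram G 0) (hG : ∀ a, (G a).natDegree ≤ 4) :
    Module.finrank K (Submodule.span K (Set.range G)) ≤ 2 :=
  (finrank_span_le_finrank_span_coeff G (n := 5) fun a => (hG a).trans_lt (by norm_num)).trans
    (finrank_span_le_two_of_isotropic two_ne_zero _ fun j k =>
      h.quadricForm_coeff_eq_zero (Fin.is_le j) (Fin.is_le k) (Or.inr rfl))

lemma eq_zero_of_natDegree_le_three (h : IsNullGram G ρ) (hG : ∀ a, (G a).natDegree ≤ 3) :
    ρ = 0 :=
  C_eq_zero.mp (by simpa [derivGram_eq_zero_of_natDegree_le G hG 0 (by norm_num : 3 < 4)]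
    using (h 0 4 (by norm_num) le_rfl).symm)

end IsNullGram

lemma exists_mul_sub_mul_ne_zero {ι : Type*} {u v : ι → K} (f : (ι → K) →ₗ[K] K) (hu : u ≠ 0)
    (hfu : f u = 0) (hfv : f v ≠ 0) : ∃ a b, u a * v b - u b * v a ≠ 0 := by
  by_contra! hmin
  obtain ⟨a, ha⟩ := Function.ne_iff.mp hu
  have : u a • v = v a • u := funext fun b => by
    simp only [Pi.smul_apply, smul_eq_mul]
    linear_combination hmin a b
  have hf := congrArg f this
  rw [map_smul, map_smul, hfu, smul_zero, smul_eq_mul] at hf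
  exact hfv ((mul_eq_zero.mp hf).resolve_left ha)

lemma exists_mem_pairs5_mul_sub_mul_ne_zero {R : Type*} [CommRing R] {u v : Fin 5 → R}
    (h : ∃ a b, u a * v b - u b * v a ≠ 0) :
    ∃ p ∈ pairs5, u p.1 * v p.2 - u p.2 * v p.1 ≠ 0 := by
  obtain ⟨a, b, hab⟩ := h
  rcases lt_trichotomy a b with hlt | rfl | hgt
  · exact ⟨(a, b), by simp [pairs5, hlt], hab⟩
  · simp at hab
  · refine ⟨(b, a), by simp [pairs5, hgt], fun h => hab ?_⟩
    linear_combination -h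

lemma exists_mem_pairs5_mul_sub_mul_ne_zero_of_quadricForm {u v z : Fin 5 → K} (hu : u ≠ 0)
    (huz : quadricForm K u z = 0) (hvz : quadricForm K v z ≠ 0) :
    ∃ p ∈ pairs5, u p.1 * v p.2 - u p.2 * v p.1 ≠ 0 :=
  exists_mem_pairs5_mul_sub_mul_ne_zero
    (exists_mul_sub_mul_ne_zero ((quadricForm K).flip z) hu huz hvz)

lemma gcd_eq_one_of_forall_exists_eval_ne_zero [IsAlgClosed K] [DecidableEq K] {ι : Type*}
    (s : Finset ι) (f : ι → K[X]) (h : ∀ t, ∃ i ∈ s, (f i).eval t ≠ 0) : s.gcd f = 1 := by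
  have hunit : IsUnit (s.gcd f) := by
    refine isUnit_iff_degree_eq_zero.mpr (by_contra fun hdeg => ?_)
    obtain ⟨t, ht⟩ := IsAlgClosed.exists_root _ hdeg
    obtain ⟨i, hi, hne⟩ := h t
    exact hne (eval_eq_zero_of_dvd_of_eval_eq_zero (Finset.gcd_dvd hi) ht)
  rw [← Finset.normalize_gcd, normalize_eq_one.mpr hunit]

section Wronskian

variable {R : Type*} [CommRing R]

lemma natDegree_mul_derivative_sub_le {p q : R[X]} {n : ℕ} (hp : p.natDegree ≤ n)
    (hq : q.natDegree ≤ n) : (p * derivative q - q * derivative p).natDegree ≤ 2 * n - 2 := by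
  rw [natDegree_le_iff_coeff_eq_zero]
  intro N hN
  rw [coeff_sub, coeff_mul, coeff_mul, ← Finset.sum_sub_distrib]
  refine Finset.sum_eq_zero ?_
  rintro ⟨i, j⟩ hij
  rw [Finset.HasAntidiagonal.mem_antidiagonal] at hij
  simp only [coeff_derivative]
  -- the only pair not killed by the degree bounds is `(n, n - 1)`, where the two terms cancel
  rcases Nat.lt_or_ge n i with hi | hi
  · rw [coeff_eq_zero_of_natDegree_lt (hp.trans_lt hi),
      coeff_eq_zero_of_natDegree_lt (hq.trans_lt hi)]
    ring
  rcases Nat.lt_or_ge n (j + 1) with hj | hj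
  · rw [coeff_eq_zero_of_natDegree_lt (hp.trans_lt hj),
      coeff_eq_zero_of_natDegree_lt (hq.trans_lt hj)]
    ring
  obtain rfl : i = n := by omega
  obtain rfl : j + 1 = i := by omega
  ring

lemma coeff_six_mul_derivative_sub {p q : R[X]} (hp : p.natDegree ≤ 4) (hq : q.natDegree ≤ 4) :
    (p * derivative q - q * derivative p).coeff 6 =
      p.coeff 3 * q.coeff 4 - q.coeff 3 * p.coeff 4 := by
  have hp' : ∀ m, 4 < m → p.coeff m = 0 := fun _ hm =>
    coeff_eq_zero_of_natDegree_lt (hp.trans_lt hm)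
  have hq' : ∀ m, 4 < m → q.coeff m = 0 := fun _ hm =>
    coeff_eq_zero_of_natDegree_lt (hq.trans_lt hm)
  simp only [coeff_sub, coeff_mul, Finset.Nat.sum_antidiagonal_eq_sum_range_succ_mk,
    Finset.sum_range_succ, Finset.sum_range_zero, coeff_derivative]
  norm_num [hp', hq']
  ring

end Wronskian

namespace IsNullGram

variable {G : Fin 5 → ℂ[X]} {ρ : ℂ}

lemma exists_eval_minor5_ne_zero (h : IsNullGram G ρ) (hρ : ρ ≠ 0) (t : ℂ) :
    ∃ p ∈ pairs5, (minor5 G p).eval t ≠ 0 := by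
  have hu : (fun a => (G a).eval t) ≠ 0 := fun hu => hρ <| by
    simpa [hu] using (h.quadricForm_eval t (j := 0) (k := 4) (by norm_num) (by norm_num)).symm
  obtain ⟨p, hp, hne⟩ := exists_mem_pairs5_mul_sub_mul_ne_zero_of_quadricForm
    (v := fun a => (derivative (G a)).eval t) (z := fun a => (derivative^[3] (G a)).eval t) hu
    (by simpa using h.quadricForm_eval t (j := 0) (k := 3) (by norm_num) (by norm_num))
    ((h.quadricForm_eval t (j := 1) (k := 3) (by norm_num) (by norm_num)).trans_ne
      (by simpa using hρ))
  exact ⟨p, hp, by simpa [minor5] using hne⟩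

lemma sup_natDegree_minor5 (h : IsNullGram G ρ) (hρ : ρ ≠ 0) (hG : ∀ a, (G a).natDegree ≤ 4) :
    pairs5.sup (fun p => (minor5 G p).natDegree) = 6 := by
  refine le_antisymm (Finset.sup_le fun p _ => natDegree_mul_derivative_sub_le (hG _) (hG _)) ?_
  obtain ⟨p, hp, hne⟩ := exists_mem_pairs5_mul_sub_mul_ne_zero_of_quadricForm
    (fun hu => h.quadricForm_coeff_ne_zero hρ (j := 3) (k := 1) (by norm_num) rfl (by simp [hu]))
    (h.quadricForm_coeff_eq_zero (j := 3) (k := 0) (by norm_num) (by norm_num) (by simp))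
    (h.quadricForm_coeff_ne_zero hρ (j := 4) (k := 0) le_rfl rfl)
  have hcoeff : (minor5 G p).coeff 6 ≠ 0 := by
    rwa [minor5, coeff_six_mul_derivative_sub (hG _) (hG _)]
  exact (le_natDegree_of_ne_zero hcoeff).trans
    (Finset.le_sup (f := fun p => (minor5 G p).natDegree) hp)

end IsNullGram

lemma _root_.IsNullCurve.exists_isNullGram {G : Fin 5 → ℂ[X]} (hG : IsNullCurve G)
    (hdeg : ∀ a, (G a).natDegree ≤ 4) : ∃ ρ, IsNullGram G ρ := by
  refine exists_eq_antidiagonal_of_derivative (derivGram_comm G) (derivative_derivGram G)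
    (fun j => derivGram_eq_zero_of_natDegree_le G hdeg j (by norm_num)) ?_ ?_ <;>
    simp only [derivGram, quadricForm_self, Function.iterate_zero_apply, Function.iterate_one]
  exacts [by rw [hG.1, mul_zero], by rw [hG.2, mul_zero]]

end NullCurve

open NullCurve in
theorem nonlinear_null_curve_degree_ge_four_general (G : Fin 5 → ℂ[X])
    (hnull : IsNullCurve G)
    (hspan : 3 ≤ Module.finrank ℂ ↥(Submodule.span ℂ (Set.range G))) :
    4 ≤ Finset.univ.sup (fun a => (G a).natDegree) ∧
    (Finset.univ.sup (fun a => (G a).natDegree) = 4 →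
      pairs5.gcd (minor5 G) = 1 ∧
      pairs5.sup (fun p => (minor5 G p).natDegree) = 6) := by
  have hle : ∀ a, (G a).natDegree ≤ Finset.univ.sup (fun a => (G a).natDegree) :=
    fun a => Finset.le_sup (f := fun a => (G a).natDegree) (Finset.mem_univ a)
  have hρ : ∀ {ρ}, IsNullGram G ρ → (∀ a, (G a).natDegree ≤ 4) → ρ ≠ 0 := fun h hG hρ0 => by
    have := (hρ0 ▸ h).finrank_span_le_two hG
    omega
  refine ⟨?_, fun hd => ?_⟩
  · by_contra! hlt
    have hG : ∀ a, (G a).natDegree ≤ 3 := fun a => by have := hle a; omega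
    obtain ⟨ρ, h⟩ := hnull.exists_isNullGram fun a => (hG a).trans (by norm_num)
    exact hρ h (fun a => (hG a).trans (by norm_num)) (h.eq_zero_of_natDegree_le_three hG)
  · have hG : ∀ a, (G a).natDegree ≤ 4 := fun a => hd ▸ hle a
    obtain ⟨ρ, h⟩ := hnull.exists_isNullGram hG
    exact ⟨gcd_eq_one_of_forall_exists_eval_ne_zero _ _ (h.exists_eval_minor5_ne_zero (hρ h hG)),
      h.sup_natDegree_minor5 (hρ h hG) hG⟩

/-- Every nonlinear null curve in `Q³` has degree at least `4`, and a nonlinear 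
null curve of degree exactly `4` is unbranched. -/
theorem nonlinear_null_curve_degree_ge_four (G : Fin 5 → ℂ[X])
    (hnull : IsNullCurve G)
    (hgcd : Finset.univ.gcd G = 1)
    (hspan : 3 ≤ Module.finrank ℂ ↥(Submodule.span ℂ (Set.range G))) :
    4 ≤ Finset.univ.sup (fun a => (G a).natDegree) ∧
    (Finset.univ.sup (fun a => (G a).natDegree) = 4 →
      pairs5.gcd (minor5 G) = 1 ∧
      pairs5.sup (fun p => (minor5 G p).natDegree) = 6) :=
  nonlinear_null_curve_degree_ge_four_general G hnull hspan
end

section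
/- A nonlinear contact curve in P³ is nondegenerate: if β is a nondegenerate alternating bilinear form on ℂ⁴ and F : Fin 4 → ℂ[X] satisfies the contact condition Σ_{0≤i<j≤3} β(e_i,e_j)·(F_i·F_j' − F_j·F_i') = 0, and the components F₀, F₁, F₂, F₃ span a ℂ-subspace of ℂ[X] of dimension at least 3, then F₀, F₁, F₂, F₃ are linearly independent over ℂ. -/
open Polynomial Matrix

/-- The minor `W_ij = F_i·F_j' − F_j·F_i'` of a curve `F : Fin 4 → ℂ[X]`. -/
noncomputable def minor4 (F : Fin 4 → ℂ[X]) (i j : Fin 4) : ℂ[X] :=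
  F i * derivative (F j) - F j * derivative (F i)

/-- `F` is a contact curve for the alternating bilinear form with matrix `B`:
`Σ_{0 ≤ i < j ≤ 3} β(e_i,e_j)·W_ij = 0`. -/
noncomputable def IsContactCurve (B : Matrix (Fin 4) (Fin 4) ℂ) (F : Fin 4 → ℂ[X]) : Prop :=
  ∑ p ∈ Finset.univ.filter (fun p : Fin 4 × Fin 4 => p.1 < p.2),
    C (B p.1 p.2) * minor4 F p.1 p.2 = 0

/-!
Suppose `∑ cᵢ Fᵢ = 0` with `c ≠ 0`. Because `β` is nondegenerate it has a Darboux decomposition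
`β = c ∧ a + u ∧ w` in which `c` itself occurs: subtracting `c ∧ a` from `β` for a suitable `a`
enlarges the kernel by a plane, and an alternating form of rank at most two is a single wedge.
With `g_x = ∑ xᵢ Fᵢ` the contact condition becomes `W(g_c, g_a) + W(g_u, g_w) = 0`, where `W` is the
Wronskian. As `g_c = 0`, the Wronskian of `g_u` and `g_w` vanishes, so both are multiples of one
polynomial `r`. Since `c, a, u, w` span `ℂ⁴`, every `Fᵢ` lies in the span of `g_a` and `r`.
-/

open Module

namespace Polynomial

theorem wronskian_mul_mul {R : Type*} [CommRing R] (d a b : R[X]) :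
    wronskian (d * a) (d * b) = d ^ 2 * wronskian a b := by
  simp only [wronskian, derivative_mul]
  ring

theorem exists_eq_smul_of_wronskian_eq_zero {K : Type*} [Field K] [CharZero K] {p q : K[X]}
    (h : wronskian p q = 0) : ∃ r : K[X], ∃ s t : K, p = s • r ∧ q = t • r := by
  classical
  obtain ⟨p₀, q₀, hp, hq, hunit⟩ := extract_gcd p q
  generalize gcd p q = d at hp hq
  subst hp hq
  by_cases hd : d = 0
  · exact ⟨0, 0, 0, by simp [hd], by simp [hd]⟩
  rw [wronskian_mul_mul, mul_eq_zero, or_iff_right (pow_ne_zero 2 hd)] at h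
  obtain ⟨hp₀, hq₀⟩ := ((gcd_isUnit_iff p₀ q₀).mp hunit).wronskian_eq_zero_iff.mp h
  refine ⟨d, p₀.coeff 0, q₀.coeff 0, ?_, ?_⟩
  · rw [smul_eq_C_mul, ← eq_C_of_derivative_eq_zero hp₀, mul_comm]
  · rw [smul_eq_C_mul, ← eq_C_of_derivative_eq_zero hq₀, mul_comm]

end Polynomial

namespace Matrix

section CommRing

variable {R n : Type*} [CommRing R]

def wedge (x y : n → R) : Matrix n n R := vecMulVec x y - vecMulVec y x

theorem wedge_smul (t : R) (x y : n → R) : wedge x (t • y) = t • wedge x y := by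
  ext i j
  simp only [wedge, smul_apply, sub_apply, vecMulVec_apply, Pi.smul_apply, smul_eq_mul]
  ring

variable [Fintype n]

theorem wedge_mulVec (x y z : n → R) : wedge x y *ᵥ z = (y ⬝ᵥ z) • x - (x ⬝ᵥ z) • y := by
  simp [wedge, sub_mulVec, vecMulVec_mulVec]

theorem dotProduct_wedge_mulVec_self (x y z : n → R) : z ⬝ᵥ wedge x y *ᵥ z = 0 := by
  simp only [wedge_mulVec, dotProduct_sub, dotProduct_smul, smul_eq_mul, dotProduct_comm x z,
    dotProduct_comm y z]
  ring

theorem dotProduct_sub_wedge_mulVec_self {M : Matrix n n R} (hM : ∀ x, x ⬝ᵥ M *ᵥ x = 0)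
    (a b x : n → R) : x ⬝ᵥ (M - wedge a b) *ᵥ x = 0 := by
  rw [sub_mulVec, dotProduct_sub, hM, dotProduct_wedge_mulVec_self, sub_zero]

theorem dotProduct_mulVec_eq_neg_of_alt {M : Matrix n n R} (hM : ∀ x, x ⬝ᵥ M *ᵥ x = 0)
    (x y : n → R) : x ⬝ᵥ M *ᵥ y = -(y ⬝ᵥ M *ᵥ x) := by
  have h := hM (x + y)
  simp only [mulVec_add, dotProduct_add, add_dotProduct, hM x, hM y] at h
  linear_combination h

theorem exists_dotProduct_mulVec_ne_zero [DecidableEq n] {M : Matrix n n R} (hM : M ≠ 0) :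
    ∃ p q : n → R, p ⬝ᵥ M *ᵥ q ≠ 0 := by
  obtain ⟨i, j, hij⟩ : ∃ i j, M i j ≠ 0 := by
    by_contra! h
    exact hM (ext h)
  exact ⟨Pi.single i 1, Pi.single j 1, by simpa [mulVec_single_one] using hij⟩

end CommRing

section Field

variable {K n : Type*} [Field K] [Fintype n]

theorem eq_zero_of_mulVec_smul_add_smul_eq_zero {M : Matrix n n K} (hM : ∀ x, x ⬝ᵥ M *ᵥ x = 0)
    {p q : n → K} (hs : p ⬝ᵥ M *ᵥ q ≠ 0) {α β : K} (h : M *ᵥ (α • p + β • q) = 0) :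
    α = 0 ∧ β = 0 := by
  have hp := congrArg (p ⬝ᵥ ·) h
  have hq := congrArg (q ⬝ᵥ ·) h
  simp only [mulVec_add, mulVec_smul, dotProduct_add, dotProduct_smul, hM,
    dotProduct_mulVec_eq_neg_of_alt hM q p, dotProduct_zero, smul_eq_mul] at hp hq
  exact ⟨by simpa [hs] using hq, by simpa [hs] using hp⟩

theorem ker_sup_span_le_ker_sub_wedge {M : Matrix n n K} (hM : ∀ x, x ⬝ᵥ M *ᵥ x = 0)
    {p q : n → K} (hs : p ⬝ᵥ M *ᵥ q ≠ 0) :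
    LinearMap.ker M.mulVecLin ⊔ Submodule.span K (Set.range ![p, q]) ≤
      LinearMap.ker (M - (p ⬝ᵥ M *ᵥ q)⁻¹ • wedge (M *ᵥ p) (M *ᵥ q)).mulVecLin := by
  have anti := dotProduct_mulVec_eq_neg_of_alt hM
  generalize hsdef : p ⬝ᵥ M *ᵥ q = s at hs
  have hM' : ∀ z, (M - s⁻¹ • wedge (M *ᵥ p) (M *ᵥ q)) *ᵥ z =
      M *ᵥ z + s⁻¹ • ((q ⬝ᵥ M *ᵥ z) • M *ᵥ p - (p ⬝ᵥ M *ᵥ z) • M *ᵥ q) := by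
    intro z
    rw [sub_mulVec, smul_mulVec, wedge_mulVec, dotProduct_comm (M *ᵥ q),
      dotProduct_comm (M *ᵥ p), anti z q, anti z p]
    module
  refine sup_le (fun z (hz : M *ᵥ z = 0) => ?_) (Submodule.span_le.mpr ?_)
  · change _ *ᵥ z = 0
    simp [hM', hz]
  · rintro _ ⟨i, rfl⟩
    fin_cases i
    · change _ *ᵥ p = 0
      simp [hM', hM p, anti q p, hsdef, smul_smul, hs]
    · change _ *ᵥ q = 0
      simp [hM', hM q, hsdef, smul_smul, hs]

theorem finrank_ker_add_two_le {M : Matrix n n K} (hM : ∀ x, x ⬝ᵥ M *ᵥ x = 0) {p q : n → K}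
    (hs : p ⬝ᵥ M *ᵥ q ≠ 0) :
    finrank K (LinearMap.ker M.mulVecLin) + 2 ≤
      finrank K (LinearMap.ker (M - (p ⬝ᵥ M *ᵥ q)⁻¹ • wedge (M *ᵥ p) (M *ᵥ q)).mulVecLin) := by
  have hpq : finrank K (Submodule.span K (Set.range ![p, q])) = 2 :=
    finrank_span_eq_card <| LinearIndependent.pair_iff.mpr fun α β h =>
      eq_zero_of_mulVec_smul_add_smul_eq_zero hM hs (by simp [h])
  have hdisj : LinearMap.ker M.mulVecLin ⊓ Submodule.span K (Set.range ![p, q]) = ⊥ := by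
    refine (Submodule.eq_bot_iff _).mpr fun z hz => ?_
    rw [Submodule.mem_inf, range_cons_cons_empty, Submodule.mem_span_pair] at hz
    obtain ⟨hz, α, β, rfl⟩ := hz
    obtain ⟨rfl, rfl⟩ := eq_zero_of_mulVec_smul_add_smul_eq_zero hM hs hz
    simp
  have hsum := Submodule.finrank_sup_add_finrank_inf_eq (LinearMap.ker M.mulVecLin)
    (Submodule.span K (Set.range ![p, q]))
  rw [hdisj, finrank_bot, hpq] at hsum
  have := Submodule.finrank_mono (ker_sup_span_le_ker_sub_wedge hM hs)
  omega

theorem rank_sub_wedge_add_two_le {M : Matrix n n K} (hM : ∀ x, x ⬝ᵥ M *ᵥ x = 0)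
    {p q : n → K} (hs : p ⬝ᵥ M *ᵥ q ≠ 0) :
    (M - (p ⬝ᵥ M *ᵥ q)⁻¹ • wedge (M *ᵥ p) (M *ᵥ q)).rank + 2 ≤ M.rank := by
  have := finrank_ker_add_two_le hM hs
  have := LinearMap.finrank_range_add_finrank_ker M.mulVecLin
  have := LinearMap.finrank_range_add_finrank_ker
    (M - (p ⬝ᵥ M *ᵥ q)⁻¹ • wedge (M *ᵥ p) (M *ᵥ q)).mulVecLin
  rw [rank, rank]
  omega

theorem eq_zero_of_rank_eq_zero {m : Type*} {M : Matrix m n K} (h : M.rank = 0) : M = 0 := by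
  rw [rank, Submodule.finrank_eq_zero, LinearMap.range_eq_bot] at h
  exact ext_iff_mulVec.mpr fun v => by simpa using LinearMap.congr_fun h v

theorem exists_eq_wedge_of_rank_le_two [DecidableEq n] {M : Matrix n n K}
    (hM : ∀ x, x ⬝ᵥ M *ᵥ x = 0) (hrank : M.rank ≤ 2) : ∃ u w, M = wedge u w := by
  by_cases h0 : M = 0
  · exact ⟨0, 0, by simp [h0, wedge]⟩
  obtain ⟨p, q, hs⟩ := exists_dotProduct_mulVec_ne_zero h0
  have := rank_sub_wedge_add_two_le hM hs
  refine ⟨M *ᵥ p, (p ⬝ᵥ M *ᵥ q)⁻¹ • M *ᵥ q, ?_⟩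
  rw [wedge_smul, ← sub_eq_zero]
  exact eq_zero_of_rank_eq_zero (by omega)

theorem dotProduct_mulVec_self_eq_zero_of_transpose_eq_neg [NeZero (2 : K)] {M : Matrix n n K}
    (hM : Mᵀ = -M) (x : n → K) : x ⬝ᵥ M *ᵥ x = 0 := by
  have h : x ⬝ᵥ M *ᵥ x = -(x ⬝ᵥ M *ᵥ x) := by
    conv_lhs => rw [dotProduct_mulVec, ← mulVec_transpose, hM, dotProduct_comm]
    rw [neg_mulVec, dotProduct_neg]
  have h2 : (2 : K) * (x ⬝ᵥ M *ᵥ x) = 0 := by linear_combination h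
  exact (mul_eq_zero.mp h2).resolve_left two_ne_zero

theorem exists_eq_wedge_add_wedge {B : Matrix (Fin 4) (Fin 4) K} (hB : ∀ x, x ⬝ᵥ B *ᵥ x = 0)
    (hdet : B.det ≠ 0) {c : Fin 4 → K} (hc : c ≠ 0) :
    ∃ a u w, B = wedge c a + wedge u w := by
  -- reducing along `B⁻¹ c` makes the subtracted wedge start with `B (B⁻¹ c) = c`
  have hBp : B *ᵥ (B⁻¹ *ᵥ c) = c := by
    rw [mulVec_mulVec, mul_nonsing_inv _ (isUnit_iff_ne_zero.mpr hdet), one_mulVec]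
  obtain ⟨q, hq⟩ : ∃ q, c ⬝ᵥ q ≠ 0 := by
    by_contra! h
    exact hc (dotProduct_eq_zero_iff.mp h)
  have hs : B⁻¹ *ᵥ c ⬝ᵥ B *ᵥ q ≠ 0 := by
    rwa [dotProduct_mulVec_eq_neg_of_alt hB, hBp, dotProduct_comm, neg_ne_zero]
  set a := (B⁻¹ *ᵥ c ⬝ᵥ B *ᵥ q)⁻¹ • B *ᵥ q
  have hrank : (B - wedge c a).rank + 2 ≤ B.rank := by
    simpa only [hBp, a, wedge_smul] using rank_sub_wedge_add_two_le hB hs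
  obtain ⟨u, w, huw⟩ := exists_eq_wedge_of_rank_le_two (dotProduct_sub_wedge_mulVec_self hB c a)
    (by have := rank_le_width B; omega)
  exact ⟨a, u, w, by rw [← huw, add_sub_cancel]⟩

theorem span_range_eq_top_of_det_ne_zero {c a u w : Fin 4 → K}
    (h : (wedge c a + wedge u w).det ≠ 0) : Submodule.span K (Set.range ![c, a, u, w]) = ⊤ := by
  refine Submodule.eq_top_iff'.mpr fun z => ?_
  set y := (wedge c a + wedge u w)⁻¹ *ᵥ z
  have hz : (wedge c a + wedge u w) *ᵥ y = z := by
    rw [mulVec_mulVec, mul_nonsing_inv _ (isUnit_iff_ne_zero.mpr h), one_mulVec]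
  rw [← hz, Submodule.mem_span_range_iff_exists_fun]
  refine ⟨![a ⬝ᵥ y, -(c ⬝ᵥ y), w ⬝ᵥ y, -(u ⬝ᵥ y)], ?_⟩
  simp only [Fin.sum_univ_four, cons_val_zero, cons_val_one, cons_val, neg_smul, add_mulVec,
    wedge_mulVec]
  module

end Field

end Matrix

theorem isContactCurve_wedge_add_wedge_iff (F : Fin 4 → ℂ[X]) (c a u w : Fin 4 → ℂ) :
    IsContactCurve (wedge c a + wedge u w) F ↔
      wronskian (Fintype.linearCombination ℂ F c) (Fintype.linearCombination ℂ F a) +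
        wronskian (Fintype.linearCombination ℂ F u) (Fintype.linearCombination ℂ F w) = 0 := by
  simp +decide only [IsContactCurve, Finset.sum_filter, Fintype.sum_prod_type, Fin.sum_univ_four,
    Fintype.linearCombination_apply, wedge, Matrix.add_apply, Matrix.sub_apply, vecMulVec_apply,
    minor4, wronskian, smul_eq_C_mul, derivative_add, derivative_mul, derivative_C, zero_mul,
    C_add, C_sub, C_mul, if_true, if_false, add_zero, zero_add]
  constructor <;> intro h <;> linear_combination h

theorem finrank_span_range_le_two {K V : Type*} [Field K] [AddCommGroup V] [Module K V]
    {F : Fin 4 → V} {c a u w : Fin 4 → K} (hdet : (wedge c a + wedge u w).det ≠ 0)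
    (hc : Fintype.linearCombination K F c = 0) {r : V} {s t : K}
    (hu : Fintype.linearCombination K F u = s • r) (hw : Fintype.linearCombination K F w = t • r) :
    finrank K (Submodule.span K (Set.range F)) ≤ 2 := by
  set P := Submodule.span K (Set.range ![Fintype.linearCombination K F a, r])
  have hle : Submodule.span K (Set.range F) ≤ P := by
    rw [← Fintype.range_linearCombination, LinearMap.range_eq_map,
      ← span_range_eq_top_of_det_ne_zero hdet, Submodule.map_span, Submodule.span_le,
      ← Set.range_comp]
    rintro _ ⟨j, rfl⟩
    have hr : r ∈ P := Submodule.subset_span ⟨1, rfl⟩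
    fin_cases j
    · simp [hc]
    · exact Submodule.subset_span ⟨0, rfl⟩
    · simpa [hu] using P.smul_mem s hr
    · simpa [hw] using P.smul_mem t hr
  have : FiniteDimensional K P := FiniteDimensional.span_of_finite K (Set.finite_range _)
  exact (Submodule.finrank_mono hle).trans (finrank_range_le_card _)

/-- A nonlinear contact curve in `P³` is nondegenerate. -/
theorem nonlinear_contact_curve_nondegenerate (B : Matrix (Fin 4) (Fin 4) ℂ)
    (halt : Bᵀ = -B) (hdet : B.det ≠ 0)
    (F : Fin 4 → ℂ[X]) (hcontact : IsContactCurve B F)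
    (hspan : 3 ≤ Module.finrank ℂ ↥(Submodule.span ℂ (Set.range F))) :
    LinearIndependent ℂ F := by
  by_contra hdep
  obtain ⟨c, hsum, i, hi⟩ := Fintype.not_linearIndependent_iff.mp hdep
  obtain ⟨a, u, w, rfl⟩ := exists_eq_wedge_add_wedge
    (dotProduct_mulVec_self_eq_zero_of_transpose_eq_neg halt) hdet (Function.ne_iff.mpr ⟨i, hi⟩)
  have hc : Fintype.linearCombination ℂ F c = 0 := hsum
  have hW := (isContactCurve_wedge_add_wedge_iff F c a u w).mp hcontact
  rw [hc, wronskian_zero_left, zero_add] at hW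
  obtain ⟨r, s, t, hu, hw⟩ := exists_eq_smul_of_wronskian_eq_zero hW
  have := finrank_span_range_le_two hdet hc hu hw
  omega
end

section
/- The second associated curve of a nondegenerate contact curve is nondegenerate in P(W) ≅ P⁴: if β is a nondegenerate alternating bilinear form on ℂ⁴ and F : Fin 4 → ℂ[X] is a contact curve for β whose components F₀, F₁, F₂, F₃ are ℂ-linearly independent, then the six minors W_ij = F_i·F_j' − F_j·F_i' (0 ≤ i < j ≤ 3) span a ℂ-subspace of ℂ[X] of dimension exactly 5. -/
/-!
The minors are the images of the basis vectors under `c ↦ Σ_{i<j} c_ij W_ij` on `Λ²ℂ⁴ ≅ ℂ⁶`,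
so it suffices to show that the kernel of this map, the space of contact relations of `F`, is the
line through `β`. A relation `D` with vanishing Pfaffian is decomposable, `D = x ∧ y`, and then
`Σ D_ij W_ij` is the Wronskian of `x·F` and `y·F`; a vanishing Wronskian makes these two
polynomials proportional, hence `x` and `y` are proportional since the `F_i` are independent, and
`D = 0`. For an arbitrary relation `N`, `Pf (N - sβ)` is a quadratic polynomial in `s` with leading
coefficient `Pf β ≠ 0` (as `det β = (Pf β)²`); at a root `s`, `N - sβ` is a relation with
vanishing Pfaffian, so `N = sβ`.
-/

open Polynomial Matrix

namespace Polynomial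

variable {K : Type*} [Field K] [CharZero K]

theorem not_linearIndependent_of_wronskian_eq_zero {a b : K[X]} (hw : wronskian a b = 0) :
    ¬LinearIndependent K ![a, b] := by
  classical
  obtain ⟨a', b', ha, hb, hunit⟩ := extract_gcd a b
  have hcop : IsCoprime a' b' := (gcd_isUnit_iff a' b').mp hunit
  by_cases hb0 : b = 0
  · simpa [hb0] using fun h : LinearIndependent K ![a, 0] => h.ne_zero 1
  generalize gcd a b = d at ha hb
  subst ha hb
  have hd : d ≠ 0 := left_ne_zero_of_mul hb0
  have hw' : wronskian a' b' = 0 := by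
    have : d ^ 2 * wronskian a' b' = 0 := by
      rw [← hw]; simp only [wronskian, derivative_mul]; ring
    simpa [hd] using this
  obtain ⟨ha', hb'⟩ := hcop.wronskian_eq_zero_iff.mp hw'
  rw [derivative_eq_zero] at ha' hb'
  obtain ⟨α, rfl⟩ : ∃ α, a' = C α := ⟨_, eq_C_of_natDegree_eq_zero ha'⟩
  obtain ⟨β, rfl⟩ : ∃ β, b' = C β := ⟨_, eq_C_of_natDegree_eq_zero hb'⟩
  rw [LinearIndependent.pair_iff]
  intro h
  have := h β (-α) (by simp only [smul_eq_C_mul, map_neg]; ring)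
  exact hb0 (by simp [this.1])

end Polynomial

theorem mul_eq_mul_of_not_linearIndependent_pair {ι K : Type*} [Field K] {x y : ι → K}
    (h : ¬LinearIndependent K ![x, y]) (i j : ι) : x i * y j = x j * y i := by
  obtain ⟨s, t, hst, hne⟩ : ∃ s t : K, s • x + t • y = 0 ∧ ¬(s = 0 ∧ t = 0) := by
    simpa [LinearIndependent.pair_iff] using h
  have hi : s * x i + t * y i = 0 := by simpa using congrFun hst i
  have hj : s * x j + t * y j = 0 := by simpa using congrFun hst j
  rw [← sub_eq_zero]
  by_cases hs : s = 0
  · have ht : t ≠ 0 := fun ht => hne ⟨hs, ht⟩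
    refine (mul_eq_zero.mp ?_).resolve_left ht
    linear_combination x i * hj - x j * hi
  · refine (mul_eq_zero.mp ?_).resolve_left hs
    linear_combination y j * hi - y i * hj

theorem LinearIndependent.mul_eq_mul_of_wronskian_eq_zero {ι K : Type*} [Fintype ι] [Field K]
    [CharZero K] {F : ι → K[X]} (hF : LinearIndependent K F) {x y : ι → K}
    (hw : wronskian (Fintype.linearCombination K F x) (Fintype.linearCombination K F y) = 0)
    (i j : ι) : x i * y j = x j * y i := by
  refine mul_eq_mul_of_not_linearIndependent_pair (fun hxy => ?_) i j
  refine not_linearIndependent_of_wronskian_eq_zero hw ?_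
  rw [LinearIndependent.pair_iff] at hxy ⊢
  intro s t hst
  refine hxy s t (linearIndependent_iff_injective_fintypeLinearCombination.mp hF ?_)
  rwa [map_add, map_smul, map_smul, map_zero]

namespace Matrix

section Pfaffian

variable {R : Type*} [CommRing R]

def pfaffian4 (M : Matrix (Fin 4) (Fin 4) R) : R :=
  M 0 1 * M 2 3 - M 0 2 * M 1 3 + M 0 3 * M 1 2

theorem exists_eq_of_transpose_eq_neg_fin_four [IsAddTorsionFree R]
    {M : Matrix (Fin 4) (Fin 4) R} (hM : Mᵀ = -M) :
    ∃ a b c d e f : R, M = !![0, a, b, c; -a, 0, d, e; -b, -d, 0, f; -c, -e, -f, 0] := by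
  have hM' : ∀ i j, M j i = -M i j := fun i j => congrFun (congrFun hM i) j
  have hdiag : ∀ i, M i i = 0 := fun i => self_eq_neg.mp (hM' i i)
  refine ⟨M 0 1, M 0 2, M 0 3, M 1 2, M 1 3, M 2 3, ?_⟩
  ext i j
  fin_cases i <;> fin_cases j <;>
    simp [hdiag, hM' 0 1, hM' 0 2, hM' 0 3, hM' 1 2, hM' 1 3, hM' 2 3]

theorem det_eq_pfaffian4_sq [IsAddTorsionFree R] {M : Matrix (Fin 4) (Fin 4) R}
    (hM : Mᵀ = -M) : M.det = pfaffian4 M ^ 2 := by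
  obtain ⟨a, b, c, d, e, f, rfl⟩ := exists_eq_of_transpose_eq_neg_fin_four hM
  simp [det_succ_row_zero, Fin.sum_univ_succ, pfaffian4, Fin.succAbove]
  ring

theorem smul_eq_vecMulVec_sub_of_pfaffian4_eq_zero [IsAddTorsionFree R]
    {M : Matrix (Fin 4) (Fin 4) R} (hM : Mᵀ = -M) (hpf : pfaffian4 M = 0) (p q : Fin 4) :
    M p q • M = vecMulVec (Mᵀ p) (Mᵀ q) - vecMulVec (Mᵀ q) (Mᵀ p) := by
  obtain ⟨a, b, c, d, e, f, rfl⟩ := exists_eq_of_transpose_eq_neg_fin_four hM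
  simp only [pfaffian4, of_apply, cons_val', cons_val_one, cons_val_zero, cons_val_fin_one,
    cons_val] at hpf
  ext i j
  fin_cases p <;> fin_cases q <;> fin_cases i <;> fin_cases j <;>
    simp [vecMulVec_apply] <;> first | ring1 | linear_combination hpf | linear_combination -hpf

end Pfaffian

section SkewOfUpper

variable {ι R : Type*} [LinearOrder ι] [Ring R]

def skewOfUpper (c : {p : ι × ι // p.1 < p.2} → R) : Matrix ι ι R :=
  of fun i j => if h : i < j then c ⟨(i, j), h⟩ else if h : j < i then -c ⟨(j, i), h⟩ else 0

@[simp]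
theorem skewOfUpper_apply_fst_snd (c : {p : ι × ι // p.1 < p.2} → R)
    (p : {p : ι × ι // p.1 < p.2}) :
    skewOfUpper c p.1.1 p.1.2 = c p := by
  simp [skewOfUpper, p.2]

theorem transpose_skewOfUpper (c : {p : ι × ι // p.1 < p.2} → R) :
    (skewOfUpper c)ᵀ = -skewOfUpper c := by
  ext i j
  rcases lt_trichotomy i j with h | rfl | h
  · simp [skewOfUpper, h, h.not_gt]
  · simp [skewOfUpper]
  · simp [skewOfUpper, h, h.not_gt]

end SkewOfUpper

end Matrix

noncomputable def contactForm (F : Fin 4 → ℂ[X]) : Matrix (Fin 4) (Fin 4) ℂ →ₗ[ℂ] ℂ[X] where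
  toFun M := ∑ p ∈ Finset.univ.filter (fun p : Fin 4 × Fin 4 => p.1 < p.2),
    C (M p.1 p.2) * minor4 F p.1 p.2
  map_add' M N := by simp only [Matrix.add_apply, C_add, add_mul, Finset.sum_add_distrib]
  map_smul' c M := by
    simp only [Matrix.smul_apply, smul_eq_mul, C_mul, mul_assoc, ← Finset.mul_sum,
      RingHom.id_apply, smul_eq_C_mul]

theorem isContactCurve_iff {B : Matrix (Fin 4) (Fin 4) ℂ} {F : Fin 4 → ℂ[X]} :
    IsContactCurve B F ↔ contactForm F B = 0 := Iff.rfl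

theorem contactForm_vecMulVec_sub (F : Fin 4 → ℂ[X]) (x y : Fin 4 → ℂ) :
    contactForm F (vecMulVec x y - vecMulVec y x) =
      wronskian (Fintype.linearCombination ℂ F x) (Fintype.linearCombination ℂ F y) := by
  have : Finset.univ.filter (fun p : Fin 4 × Fin 4 => p.1 < p.2) =
      {(0, 1), (0, 2), (0, 3), (1, 2), (1, 3), (2, 3)} := by decide
  simp only [contactForm, LinearMap.coe_mk, AddHom.coe_mk, this, Fintype.linearCombination_apply]
  simp [Fin.sum_univ_four, minor4, wronskian, vecMulVec_apply, smul_eq_C_mul]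
  ring

theorem contactForm_eq_linearCombination (F : Fin 4 → ℂ[X]) (M : Matrix (Fin 4) (Fin 4) ℂ) :
    contactForm F M = Fintype.linearCombination ℂ (fun p : {p : Fin 4 × Fin 4 // p.1 < p.2} =>
      minor4 F p.1.1 p.1.2) (fun p => M p.1.1 p.1.2) := by
  rw [Fintype.linearCombination_apply, contactForm, LinearMap.coe_mk, AddHom.coe_mk]
  simp only [smul_eq_C_mul]
  exact Finset.sum_subtype _ (by simp) _

theorem eq_zero_of_isContactCurve_of_pfaffian4_eq_zero {D : Matrix (Fin 4) (Fin 4) ℂ}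
    (hD : Dᵀ = -D) (hpf : pfaffian4 D = 0) {F : Fin 4 → ℂ[X]} (hF : LinearIndependent ℂ F)
    (hc : IsContactCurve D F) : D = 0 := by
  ext p q
  have hw : wronskian (Fintype.linearCombination ℂ F (Dᵀ p))
      (Fintype.linearCombination ℂ F (Dᵀ q)) = 0 := by
    rw [← contactForm_vecMulVec_sub, ← smul_eq_vecMulVec_sub_of_pfaffian4_eq_zero hD hpf p q,
      map_smul, isContactCurve_iff.mp hc, smul_zero]
  have hpq := hF.mul_eq_mul_of_wronskian_eq_zero hw p q
  have hqp : D q p = -D p q := congrFun (congrFun hD p) q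
  have hpp : D p p = 0 := self_eq_neg.mp (congrFun (congrFun hD p) p)
  simp only [transpose_apply, hpp, zero_mul, hqp, neg_mul, zero_eq_neg, mul_self_eq_zero] at hpq
  exact hpq

theorem exists_eq_smul_of_isContactCurve {B N : Matrix (Fin 4) (Fin 4) ℂ} (hB : Bᵀ = -B)
    (hpf : pfaffian4 B ≠ 0) (hN : Nᵀ = -N) {F : Fin 4 → ℂ[X]} (hF : LinearIndependent ℂ F)
    (hcB : IsContactCurve B F) (hcN : IsContactCurve N F) : ∃ s : ℂ, N = s • B := by
  -- `pfaffian4 (N - s • B) = pfaffian4 B * s ^ 2 + b * s + pfaffian4 N`, `b` read off at `s = 1`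
  obtain ⟨s, hs⟩ := exists_quadratic_eq_zero (b := pfaffian4 (N - B) - pfaffian4 N - pfaffian4 B)
    (c := pfaffian4 N) hpf (IsAlgClosed.exists_eq_mul_self _)
  refine ⟨s, sub_eq_zero.mp (eq_zero_of_isContactCurve_of_pfaffian4_eq_zero ?_ ?_ hF ?_)⟩
  · rw [transpose_sub, transpose_smul, hB, hN, smul_neg, neg_sub_neg, neg_sub]
  · simp only [pfaffian4, Matrix.sub_apply, Matrix.smul_apply, smul_eq_mul] at hs ⊢
    linear_combination hs
  · rw [isContactCurve_iff, map_sub, map_smul, isContactCurve_iff.mp hcN,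
      isContactCurve_iff.mp hcB, smul_zero, sub_zero]

theorem ker_linearCombination_minor4 {B : Matrix (Fin 4) (Fin 4) ℂ} (hB : Bᵀ = -B)
    (hpf : pfaffian4 B ≠ 0) {F : Fin 4 → ℂ[X]} (hF : LinearIndependent ℂ F)
    (hc : IsContactCurve B F) :
    LinearMap.ker (Fintype.linearCombination ℂ fun p : {p : Fin 4 × Fin 4 // p.1 < p.2} =>
      minor4 F p.1.1 p.1.2) = ℂ ∙ fun p => B p.1.1 p.1.2 := by
  apply le_antisymm
  · intro c hc'
    have hcN : IsContactCurve (skewOfUpper c) F := by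
      rw [isContactCurve_iff, contactForm_eq_linearCombination]
      simpa using hc'
    obtain ⟨s, hs⟩ := exists_eq_smul_of_isContactCurve hB hpf (transpose_skewOfUpper c) hF hc hcN
    refine Submodule.mem_span_singleton.mpr ⟨s, funext fun p => ?_⟩
    simpa using (congrFun (congrFun hs p.1.1) p.1.2).symm
  · rw [Submodule.span_le, Set.singleton_subset_iff, SetLike.mem_coe, LinearMap.mem_ker,
      ← contactForm_eq_linearCombination]
    exact hc

/-- The second associated curve of a nondegenerate contact curve is nondegenerate 
in `P(W) ≅ P⁴`: the six minors span a subspace of dimension exactly `5`. -/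
theorem second_associated_nondegenerate (B : Matrix (Fin 4) (Fin 4) ℂ)
    (halt : Bᵀ = -B) (hdet : B.det ≠ 0)
    (F : Fin 4 → ℂ[X]) (hcontact : IsContactCurve B F)
    (hind : LinearIndependent ℂ F) :
    Module.finrank ℂ
      ↥(Submodule.span ℂ {P : ℂ[X] | ∃ i j : Fin 4, i < j ∧ P = minor4 F i j}) = 5 := by
  have hpf : pfaffian4 B ≠ 0 := fun h => hdet (by rw [det_eq_pfaffian4_sq halt, h]; ring)
  have hB : (fun p : {p : Fin 4 × Fin 4 // p.1 < p.2} => B p.1.1 p.1.2) ≠ 0 := by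
    intro h
    have := congrFun h
    exact hpf (by simp [pfaffian4, this ⟨(0, 1), by decide⟩, this ⟨(0, 2), by decide⟩,
      this ⟨(0, 3), by decide⟩])
  have hset : {P : ℂ[X] | ∃ i j : Fin 4, i < j ∧ P = minor4 F i j} =
      Set.range fun p : {p : Fin 4 × Fin 4 // p.1 < p.2} => minor4 F p.1.1 p.1.2 := by
    ext P
    simp [eq_comm]
  have hrank := LinearMap.finrank_range_add_finrank_ker
    (Fintype.linearCombination ℂ fun p : {p : Fin 4 × Fin 4 // p.1 < p.2} => minor4 F p.1.1 p.1.2)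
  rw [ker_linearCombination_minor4 halt hpf hind hcontact, finrank_span_singleton hB,
    Fintype.range_linearCombination, Module.finrank_fintype_fun_eq_card] at hrank
  rw [hset]
  have : Fintype.card {p : Fin 4 × Fin 4 // p.1 < p.2} = 6 := rfl
  omega
end

section
/- If F : Fin 4 → ℂ[X] has ℂ-linearly independent components and its six minors W_ij = F_i·F_j' − F_j·F_i' (0 ≤ i < j ≤ 3) are ℂ-linearly dependent, then there exists a nondegenerate alternating bilinear form β on ℂ⁴ with Σ_{0≤i<j≤3} β(e_i,e_j)·W_ij = 0 (F is a contact curve for β), and β is unique up to a nonzero scalar: any two alternating bilinear forms β, β̃ on ℂ⁴, not zero, satisfying this relation are proportional. -/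
open Polynomial Matrix

/-- The Pfaffian of a `4 × 4` alternating matrix. -/
def pf4 (B : Matrix (Fin 4) (Fin 4) ℂ) : ℂ :=
  B 0 1 * B 2 3 - B 0 2 * B 1 3 + B 0 3 * B 1 2

lemma skew_apply {B : Matrix (Fin 4) (Fin 4) ℂ} (hB : Bᵀ = -B) (i j : Fin 4) :
    B j i = - B i j := by
  have := congrFun (congrFun hB i) j
  simpa [Matrix.transpose_apply] using this

lemma skew_diag {B : Matrix (Fin 4) (Fin 4) ℂ} (hB : Bᵀ = -B) (i : Fin 4) : B i i = 0 := by
  have h := skew_apply hB i i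
  linear_combination (1/2 : ℂ) * h

lemma skew_lit {B : Matrix (Fin 4) (Fin 4) ℂ} (hB : Bᵀ = -B) :
    B = !![0, B 0 1, B 0 2, B 0 3; -B 0 1, 0, B 1 2, B 1 3;
      -B 0 2, -B 1 2, 0, B 2 3; -B 0 3, -B 1 3, -B 2 3, 0] := by
  have h := skew_apply hB
  have h0 := skew_diag hB
  ext i j
  fin_cases i <;> fin_cases j <;>
    simp [h0, h 0 1, h 0 2, h 0 3, h 1 2, h 1 3, h 2 3]

lemma det_skew (B : Matrix (Fin 4) (Fin 4) ℂ) (hB : Bᵀ = -B) : B.det = pf4 B ^ 2 := by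
  rw [skew_lit hB]
  simp (config := { decide := true }) [Matrix.det_succ_row_zero, Fin.sum_univ_succ, pf4,
    Fin.succAbove, Fin.castSucc, Fin.castAdd, Fin.castLE]
  ring

lemma decompose_lit (p q r s t u : ℂ) (hpf : p * u - q * t + r * s = 0) :
    ∃ a b : Fin 4 → ℂ, ∀ i j,
      (!![0,p,q,r; -p,0,s,t; -q,-s,0,u; -r,-t,-u,0] : Matrix (Fin 4) (Fin 4) ℂ) i j
        = a i * b j - a j * b i := by
  rcases ne_or_eq p 0 with hp | hp
  · exact ⟨![0, p, q, r], ![-1, 0, s/p, t/p], fun i j => by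
      fin_cases i <;> fin_cases j <;> simp <;> (try field_simp) <;>
        first | ring1 | linear_combination hpf | linear_combination -hpf | simp [Matrix.vecHead, Matrix.vecTail]⟩
  subst hp
  rcases ne_or_eq q 0 with hq | hq
  · exact ⟨![0, 0, q, r], ![-1, -s/q, 0, u/q], fun i j => by
      fin_cases i <;> fin_cases j <;> simp <;> (try field_simp) <;>
        first | ring1 | linear_combination hpf | linear_combination -hpf | simp [Matrix.vecHead, Matrix.vecTail]⟩
  subst hq
  rcases ne_or_eq r 0 with hr | hr
  · have hs0 : s = 0 := (mul_eq_zero.mp (by linear_combination hpf : r * s = 0)).resolve_left hr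
    subst hs0
    exact ⟨![0, 0, 0, r], ![-1, -t/r, -u/r, 0], fun i j => by
      fin_cases i <;> fin_cases j <;> simp <;> (try field_simp) <;>
        first | ring1 | linear_combination hpf | linear_combination -hpf | simp [Matrix.vecHead, Matrix.vecTail]⟩
  subst hr
  rcases ne_or_eq s 0 with hs | hs
  · exact ⟨![0, 0, s, t], ![0, -1, 0, u/s], fun i j => by
      fin_cases i <;> fin_cases j <;> simp <;> (try field_simp) <;>
        first | ring1 | linear_combination hpf | linear_combination -hpf | simp [Matrix.vecHead, Matrix.vecTail]⟩
  subst hs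
  rcases ne_or_eq t 0 with ht | ht
  · exact ⟨![0, 0, 0, t], ![0, -1, -u/t, 0], fun i j => by
      fin_cases i <;> fin_cases j <;> simp <;> (try field_simp) <;>
        first | ring1 | linear_combination hpf | linear_combination -hpf | simp [Matrix.vecHead, Matrix.vecTail]⟩
  subst ht
  rcases ne_or_eq u 0 with hu | hu
  · exact ⟨![0, 0, 0, u], ![0, 0, -1, 0], fun i j => by
      fin_cases i <;> fin_cases j <;> simp <;> (try field_simp) <;>
        first | ring1 | linear_combination hpf | linear_combination -hpf | simp [Matrix.vecHead, Matrix.vecTail]⟩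
  subst hu
  exact ⟨0, 0, fun i j => by fin_cases i <;> fin_cases j <;> simp [Matrix.vecHead, Matrix.vecTail]⟩

lemma wronskian_zero_dep {P Q : ℂ[X]} (hw : P * derivative Q - Q * derivative P = 0) :
    ∃ c d : ℂ, (c ≠ 0 ∨ d ≠ 0) ∧ C c * P + C d * Q = 0 := by
  by_cases hP : P = 0
  · exact ⟨1, 0, Or.inl one_ne_zero, by simp [hP]⟩
  by_cases hQ : Q = 0
  · exact ⟨0, 1, Or.inr one_ne_zero, by simp [hQ]⟩
  set g := GCDMonoid.gcd P Q with hg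
  have hg0 : g ≠ 0 := gcd_ne_zero_of_left hP
  set p := P / g with hp
  set q := Q / g with hq
  have hP' : P = g * p := (EuclideanDomain.mul_div_cancel' hg0 (gcd_dvd_left P Q)).symm
  have hQ' : Q = g * q := (EuclideanDomain.mul_div_cancel' hg0 (gcd_dvd_right P Q)).symm
  have hcop : IsCoprime p q := isCoprime_div_gcd_div_gcd hQ
  have hw2 : g ^ 2 * (p * derivative q - q * derivative p) = 0 := by
    rw [hP', hQ', derivative_mul, derivative_mul] at hw
    linear_combination hw
  have hw3 : p * derivative q - q * derivative p = 0 :=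
    (mul_eq_zero.mp hw2).resolve_left (pow_ne_zero 2 hg0)
  have hwz : wronskian p q = 0 := by
    rw [wronskian]; linear_combination hw3
  obtain ⟨hdp, hdq⟩ := hcop.wronskian_eq_zero_iff.mp hwz
  have hpC : p = C (p.coeff 0) :=
    eq_C_of_natDegree_eq_zero (natDegree_eq_zero_of_derivative_eq_zero hdp)
  have hqC : q = C (q.coeff 0) :=
    eq_C_of_natDegree_eq_zero (natDegree_eq_zero_of_derivative_eq_zero hdq)
  refine ⟨q.coeff 0, -(p.coeff 0), Or.inr ?_, ?_⟩
  · intro h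
    apply hP
    rw [hP', hpC]
    simp [neg_eq_zero.mp h]
  · rw [hP', hQ', hpC, hqC]
    simp only [coeff_C_zero, map_neg]
    ring

lemma contact_sum (B : Matrix (Fin 4) (Fin 4) ℂ) (F : Fin 4 → ℂ[X]) :
    ∑ p ∈ Finset.univ.filter (fun p : Fin 4 × Fin 4 => p.1 < p.2),
      C (B p.1 p.2) * minor4 F p.1 p.2
    = C (B 0 1) * minor4 F 0 1 + C (B 0 2) * minor4 F 0 2 + C (B 0 3) * minor4 F 0 3
      + C (B 1 2) * minor4 F 1 2 + C (B 1 3) * minor4 F 1 3 + C (B 2 3) * minor4 F 2 3 := by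
  rw [show (Finset.univ.filter fun p : Fin 4 × Fin 4 => p.1 < p.2) =
      ({(0,1),(0,2),(0,3),(1,2),(1,3),(2,3)} : Finset (Fin 4 × Fin 4)) from by decide]
  rw [Finset.sum_insert (by decide), Finset.sum_insert (by decide), Finset.sum_insert (by decide),
      Finset.sum_insert (by decide), Finset.sum_insert (by decide), Finset.sum_singleton]
  ring

/-- Any nonzero alternating contact form of a nondegenerate curve has nonzero Pfaffian. -/
lemma pf4_ne_zero {F : Fin 4 → ℂ[X]} (hind : LinearIndependent ℂ F)
    {B : Matrix (Fin 4) (Fin 4) ℂ} (hB : Bᵀ = -B) (hB0 : B ≠ 0) (hc : IsContactCurve B F) :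
    pf4 B ≠ 0 := by
  intro hpf
  obtain ⟨a, b, hab⟩ := decompose_lit (B 0 1) (B 0 2) (B 0 3) (B 1 2) (B 1 3) (B 2 3) hpf
  have hab' : ∀ i j, B i j = a i * b j - a j * b i := by
    intro i j
    conv_lhs => rw [skew_lit hB]
    exact hab i j
  set P := C (a 0) * F 0 + C (a 1) * F 1 + C (a 2) * F 2 + C (a 3) * F 3 with hP
  set Q := C (b 0) * F 0 + C (b 1) * F 1 + C (b 2) * F 2 + C (b 3) * F 3 with hQ
  have hw : P * derivative Q - Q * derivative P = 0 := by
    unfold IsContactCurve at hc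
    rw [contact_sum] at hc
    simp only [hab' 0 1, hab' 0 2, hab' 0 3, hab' 1 2, hab' 1 3, hab' 2 3, minor4,
      C_sub, C_mul] at hc
    rw [hP, hQ]
    simp only [derivative_add, derivative_C_mul]
    linear_combination hc
  obtain ⟨c, d, hcd, hlin⟩ := wronskian_zero_dep hw
  have hz : ∀ i, c * a i + d * b i = 0 := by
    have hsum : ∑ i, (c * a i + d * b i) • F i = 0 := by
      rw [Fin.sum_univ_four]
      rw [hP, hQ] at hlin
      simp only [Polynomial.smul_eq_C_mul, C_add, C_mul]
      linear_combination hlin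
    exact fun i => Fintype.linearIndependent_iff.mp hind _ hsum i
  apply hB0
  ext i j
  rw [Matrix.zero_apply, hab' i j]
  rcases hcd with hc0 | hd0
  · exact (mul_eq_zero.mp (show c * (a i * b j - a j * b i) = 0 by
      linear_combination b j * hz i - b i * hz j)).resolve_left hc0 |>.symm ▸ rfl
  · exact (mul_eq_zero.mp (show d * (a i * b j - a j * b i) = 0 by
      linear_combination a i * hz j - a j * hz i)).resolve_left hd0 |>.symm ▸ rfl

/-- If a nondegenerate curve in `P³` has linearly dependent minors, then it is a 
contact curve for a nondegenerate alternating form `β`, unique up to scale. -/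
theorem exists_unique_contact_structure (F : Fin 4 → ℂ[X])
    (hind : LinearIndependent ℂ F)
    (hdep : ¬ LinearIndependent ℂ
      (fun p : {q : Fin 4 × Fin 4 // q.1 < q.2} => minor4 F p.1.1 p.1.2)) :
    (∃ B : Matrix (Fin 4) (Fin 4) ℂ, Bᵀ = -B ∧ B.det ≠ 0 ∧ IsContactCurve B F) ∧
    (∀ B₁ B₂ : Matrix (Fin 4) (Fin 4) ℂ, B₁ᵀ = -B₁ → B₂ᵀ = -B₂ → B₁ ≠ 0 → B₂ ≠ 0 →
      IsContactCurve B₁ F → IsContactCurve B₂ F → ∃ c : ℂ, c ≠ 0 ∧ B₂ = c • B₁) := by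
  constructor
  · -- existence
    obtain ⟨g, hg, i0, hi0⟩ := Fintype.not_linearIndependent_iff.mp hdep
    set B : Matrix (Fin 4) (Fin 4) ℂ := fun i j =>
      if h : i < j then g ⟨(i, j), h⟩ else if h' : j < i then -g ⟨(j, i), h'⟩ else 0 with hBdef
    have hBskew : Bᵀ = -B := by
      ext i j
      rw [Matrix.transpose_apply, Matrix.neg_apply]
      rcases lt_trichotomy i j with h | h | h
      · simp [hBdef, h, asymm h]
      · simp [hBdef, h]
      · simp [hBdef, h, asymm h]
    have hBentry : ∀ p : {q : Fin 4 × Fin 4 // q.1 < q.2}, B p.1.1 p.1.2 = g p := by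
      intro p
      simp [hBdef, p.2]
    have hB0 : B ≠ 0 := by
      intro h
      apply hi0
      have := congrFun (congrFun h i0.1.1) i0.1.2
      rw [hBentry i0] at this
      simpa using this
    have hcc : IsContactCurve B F := by
      unfold IsContactCurve
      rw [Finset.sum_subtype (p := fun q : Fin 4 × Fin 4 => q.1 < q.2) _ (by simp)]
      rw [← hg]
      refine Finset.sum_congr rfl fun p _ => ?_
      rw [hBentry p, Polynomial.smul_eq_C_mul]
    refine ⟨B, hBskew, ?_, hcc⟩
    rw [det_skew B hBskew]
    exact pow_ne_zero 2 (pf4_ne_zero hind hBskew hB0 hcc)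
  · -- uniqueness up to scale
    intro B₁ B₂ h1 h2 hn1 hn2 hc1 hc2
    have hpf1 : pf4 B₁ ≠ 0 := pf4_ne_zero hind h1 hn1 hc1
    set m : ℂ := B₁ 0 1 * B₂ 2 3 + B₂ 0 1 * B₁ 2 3 - B₁ 0 2 * B₂ 1 3 - B₂ 0 2 * B₁ 1 3
      + B₁ 0 3 * B₂ 1 2 + B₂ 0 3 * B₁ 1 2 with hm
    obtain ⟨z, hz⟩ := IsAlgClosed.exists_root
      (C (pf4 B₁) * X ^ 2 + C m * X + C (pf4 B₂))
      (by rw [Polynomial.degree_quadratic hpf1]; norm_num)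
    have hzeval : pf4 B₁ * z ^ 2 + m * z + pf4 B₂ = 0 := by
      have := hz
      simp only [IsRoot, eval_add, eval_mul, eval_pow, eval_C, eval_X] at this
      linear_combination this
    simp only [pf4] at hzeval
    set B := B₂ + z • B₁ with hBdef
    have hBskew : Bᵀ = -B := by
      rw [hBdef, Matrix.transpose_add, Matrix.transpose_smul, h1, h2]
      ext i j
      simp
      ring
    have hpfB : pf4 B = 0 := by
      simp only [hBdef, pf4, Matrix.add_apply, Matrix.smul_apply, smul_eq_mul]
      linear_combination hzeval
    have hcB : IsContactCurve B F := by
      unfold IsContactCurve at hc1 hc2 ⊢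
      rw [contact_sum] at hc1 hc2 ⊢
      simp only [hBdef, Matrix.add_apply, Matrix.smul_apply, smul_eq_mul, C_add, C_mul]
      linear_combination hc2 + C z * hc1
    have hBzero : B = 0 := by
      by_contra hB0
      exact pf4_ne_zero hind hBskew hB0 hcB hpfB
    have hzne : z ≠ 0 := by
      intro h
      apply hn2
      have hB2 : B₂ + z • B₁ = 0 := hBdef ▸ hBzero
      rw [h, zero_smul, add_zero] at hB2
      exact hB2
    refine ⟨-z, neg_ne_zero.mpr hzne, ?_⟩
    have : B₂ + z • B₁ = 0 := hBzero
    have := congrArg (fun M => M - z • B₁) this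
    simp only [add_sub_cancel_right, zero_sub] at this
    rw [this, neg_smul]
end

section
/- A nonlinear contact curve in P³ has degree at least 3, and in degree 3 it is the rational normal curve: if β is a nondegenerate alternating bilinear form on ℂ⁴ and F : Fin 4 → ℂ[X] is a contact curve for β with gcd(F₀,…,F₃) = 1 whose components span a ℂ-subspace of dimension at least 3, then the components are ℂ-linearly independent, max_i natDegree(F_i) ≥ 3, and if max_i natDegree(F_i) = 3 there exists A ∈ GL(4,ℂ) with F_i = Σ_{j=0}^{3} A_{ij}·X^j for all i. -/
/-!
The contact condition says `β(F, F') = 0` for the bilinear extension of `β` to `ℂ[X]⁴`. If the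
`F i` satisfy a linear relation, the curve lies in a hyperplane `u^⊥`, and `u ∈ u^⊥` as `β` is
alternating. Completing `u` to a Darboux basis `u, w, a, b` (so that `β(u, w) = β(a, b) = 1`, all
other pairings of basis vectors being `0` up to sign) and writing `F = G₀ u + G₁ w + G₂ a + G₃ b`,
the relation becomes `G₁ = 0` and the contact condition becomes `W(G₂, G₃) = 0`. Hence `G₂` and
`G₃` are proportional and the `F i` span at most a plane. So a nonlinear contact curve has
linearly independent components; four independent polynomials need degree at least `3`, and in
degree exactly `3` their coefficient matrix is invertible.
-/

open Polynomial Matrix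

namespace Polynomial

variable {K : Type*} [Field K]

lemma wronskian_mul_mul_s8 (r p q : K[X]) :
    wronskian (r * p) (r * q) = r ^ 2 * wronskian p q := by
  simp only [wronskian, derivative_mul]
  ring

lemma exists_mem_span_singleton_of_wronskian_eq_zero [CharZero K] {p q : K[X]}
    (h : wronskian p q = 0) : ∃ r : K[X], p ∈ K ∙ r ∧ q ∈ K ∙ r := by
  classical
  rcases eq_or_ne q 0 with rfl | hq
  · exact ⟨p, Submodule.mem_span_singleton_self p, Submodule.zero_mem _⟩
  have hr : gcd p q ≠ 0 := gcd_ne_zero_of_right hq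
  have hcop := isCoprime_div_gcd_div_gcd (p := p) hq
  obtain ⟨p₁, hp₁⟩ := gcd_dvd_left p q
  obtain ⟨q₁, hq₁⟩ := gcd_dvd_right p q
  generalize gcd p q = r at hr hcop hp₁ hq₁
  subst hp₁ hq₁
  rw [mul_div_cancel_left₀ _ hr, mul_div_cancel_left₀ _ hr] at hcop
  rw [wronskian_mul_mul_s8] at h
  obtain ⟨hp₁', hq₁'⟩ :=
    hcop.wronskian_eq_zero_iff.mp ((mul_eq_zero.mp h).resolve_left (pow_ne_zero 2 hr))
  refine ⟨r, Submodule.mem_span_singleton.mpr ⟨p₁.coeff 0, ?_⟩,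
    Submodule.mem_span_singleton.mpr ⟨q₁.coeff 0, ?_⟩⟩
  · rw [smul_eq_C_mul, ← eq_C_of_derivative_eq_zero hp₁', mul_comm]
  · rw [smul_eq_C_mul, ← eq_C_of_derivative_eq_zero hq₁', mul_comm]

lemma finrank_span_range_le_two_of_wronskian_eq_zero [CharZero K] {G : Fin 4 → K[X]}
    (h₁ : G 1 = 0) (hW : wronskian (G 2) (G 3) = 0) :
    Module.finrank K (Submodule.span K (Set.range G)) ≤ 2 := by
  obtain ⟨r, hr₂, hr₃⟩ := exists_mem_span_singleton_of_wronskian_eq_zero hW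
  have hr : K ∙ r ≤ Submodule.span K (Set.range ![G 0, r]) := Submodule.span_mono (by simp)
  have hG : Submodule.span K (Set.range G) ≤ Submodule.span K (Set.range ![G 0, r]) := by
    rw [Submodule.span_le]
    rintro _ ⟨k, rfl⟩
    fin_cases k
    · exact Submodule.subset_span ⟨0, rfl⟩
    · simp [h₁]
    · exact hr hr₂
    · exact hr hr₃
  have := FiniteDimensional.span_of_finite K (Set.finite_range ![G 0, r])
  exact (Submodule.finrank_mono hG).trans (finrank_range_le_card _)

lemma span_range_mulVec_map_C_le {m n : Type*} [Fintype n] (M : Matrix m n K) (G : n → K[X]) :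
    Submodule.span K (Set.range (M.map C *ᵥ G)) ≤ Submodule.span K (Set.range G) := by
  rw [Submodule.span_le]
  rintro _ ⟨i, rfl⟩
  simp only [SetLike.mem_coe, mulVec, dotProduct, map_apply, ← smul_eq_C_mul]
  exact Submodule.sum_mem _ fun j _ => Submodule.smul_mem _ _ (Submodule.subset_span ⟨j, rfl⟩)

lemma derivative_comp_mulVec_map_C {m n : Type*} [Fintype n] (M : Matrix m n K)
    (G : n → K[X]) : derivative ∘ (M.map C *ᵥ G) = M.map C *ᵥ (derivative ∘ G) := by
  ext1 i
  simp [mulVec, dotProduct]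

lemma eq_sum_C_coeff_mul_X_pow_of_mem_degreeLT {n : ℕ} {p : K[X]} (hp : p ∈ degreeLT K n) :
    p = ∑ j : Fin n, C (p.coeff j) * X ^ (j : ℕ) := by
  simpa [degreeLTEquiv, C_mul_X_pow_eq_monomial] using
    congrArg Subtype.val ((degreeLTEquiv K n).symm_apply_apply ⟨p, hp⟩).symm

lemma _root_.LinearIndependent.card_le_of_mem_degreeLT {ι : Type*} [Fintype ι] {v : ι → K[X]}
    (hv : LinearIndependent K v) {n : ℕ} (hn : ∀ i, v i ∈ degreeLT K n) : Fintype.card ι ≤ n := by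
  have hv' : LinearIndependent K fun i => (⟨v i, hn i⟩ : degreeLT K n) :=
    LinearIndependent.of_comp (degreeLT K n).subtype hv
  simpa [(degreeLTEquiv K n).finrank_eq] using hv'.fintype_card_le_finrank

lemma _root_.LinearIndependent.isUnit_coeff_matrix {n : ℕ} {v : Fin n → K[X]}
    (hv : LinearIndependent K v) (hn : ∀ i, v i ∈ degreeLT K n) :
    IsUnit (of fun i (j : Fin n) => (v i).coeff j) := by
  have hv' : LinearIndependent K fun i => (⟨v i, hn i⟩ : degreeLT K n) :=
    LinearIndependent.of_comp (degreeLT K n).subtype hv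
  exact linearIndependent_rows_iff_isUnit.mp <|
    hv'.map' (degreeLTEquiv K n).toLinearMap (degreeLTEquiv K n).ker

end Polynomial

namespace Matrix

section Skew

variable {n R : Type*} [Fintype n] [CommRing R] {B : Matrix n n R}

lemma dotProduct_mulVec_swap_of_transpose_eq_neg (hB : Bᵀ = -B) (x y : n → R) :
    y ⬝ᵥ B *ᵥ x = -(x ⬝ᵥ B *ᵥ y) := by
  rw [dotProduct_mulVec, ← mulVec_transpose, hB, neg_mulVec, neg_dotProduct, dotProduct_comm]

lemma dotProduct_mulVec_self_of_transpose_eq_neg [NoZeroDivisors R] [NeZero (2 : R)]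
    (hB : Bᵀ = -B) (x : n → R) : x ⬝ᵥ B *ᵥ x = 0 := by
  have h : 2 * (x ⬝ᵥ B *ᵥ x) = 0 := by
    linear_combination dotProduct_mulVec_swap_of_transpose_eq_neg hB x x
  exact (mul_eq_zero.mp h).resolve_left two_ne_zero

end Skew

lemma mulVec_dotProduct_mulVec_mulVec {n R : Type*} [Fintype n] [CommSemiring R]
    (M B : Matrix n n R) (x y : n → R) :
    (M *ᵥ x) ⬝ᵥ B *ᵥ (M *ᵥ y) = x ⬝ᵥ (Mᵀ * B * M) *ᵥ y := by
  rw [mulVec_mulVec, ← vecMul_transpose, dotProduct_mulVec, vecMul_vecMul, ← dotProduct_mulVec,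
    Matrix.mul_assoc]

lemma exists_dotProduct_eq_one {n K : Type*} [Fintype n] [DecidableEq n] [Field K] {x : n → K}
    (hx : x ≠ 0) : ∃ y, x ⬝ᵥ y = 1 := by
  obtain ⟨i, hi⟩ := Function.ne_iff.mp hx
  exact ⟨(x i)⁻¹ • Pi.single i 1, by simp [dotProduct_smul, dotProduct_single, inv_mul_cancel₀ hi]⟩

lemma exists_dotProduct_mulVec_eq_one {n K : Type*} [Fintype n] [DecidableEq n] [Field K]
    {B : Matrix n n K} (hB : B.det ≠ 0) {x : n → K} (hx : x ≠ 0) : ∃ y, x ⬝ᵥ B *ᵥ y = 1 := by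
  simp_rw [dotProduct_mulVec]
  exact exists_dotProduct_eq_one fun h => hB (exists_vecMul_eq_zero_iff.mp ⟨x, hx, h⟩)

lemma exists_ne_zero_forall_dotProduct_eq_zero {K : Type*} [Field K] {m n : ℕ} (hmn : m < n)
    (r : Fin m → Fin n → K) : ∃ x ≠ 0, ∀ i, r i ⬝ᵥ x = 0 := by
  obtain ⟨x, hx, hx0⟩ := Submodule.ne_bot_iff _ |>.mp <|
    LinearMap.ker_ne_bot_of_finrank_lt (f := (Matrix.of r).mulVecLin) (by simpa using hmn)
  exact ⟨x, hx0, fun i => congrFun (LinearMap.mem_ker.mp hx) i⟩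

lemma exists_symplectic_basis_fin_four {K : Type*} [Field K] [NeZero (2 : K)]
    {B : Matrix (Fin 4) (Fin 4) K} (hB : Bᵀ = -B) (hdet : B.det ≠ 0) {u : Fin 4 → K}
    (hu : u ≠ 0) :
    ∃ M : Matrix (Fin 4) (Fin 4) K, M.det ≠ 0 ∧ Mᵀ 0 = u ∧
      Mᵀ * B * M = !![0, 1, 0, 0; -1, 0, 0, 0; 0, 0, 0, 1; 0, 0, -1, 0] := by
  have swap := dotProduct_mulVec_swap_of_transpose_eq_neg hB
  have self := dotProduct_mulVec_self_of_transpose_eq_neg hB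
  obtain ⟨w, huw⟩ := exists_dotProduct_mulVec_eq_one hdet hu
  obtain ⟨a, ha, hua, hwa⟩ : ∃ a ≠ 0, u ⬝ᵥ B *ᵥ a = 0 ∧ w ⬝ᵥ B *ᵥ a = 0 := by
    obtain ⟨a, ha, h⟩ :=
      exists_ne_zero_forall_dotProduct_eq_zero (by norm_num : 2 < 4) ![u ᵥ* B, w ᵥ* B]
    exact ⟨a, ha, by simpa [dotProduct_mulVec] using h 0, by simpa [dotProduct_mulVec] using h 1⟩
  obtain ⟨z, haz⟩ := exists_dotProduct_mulVec_eq_one hdet ha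
  -- the projection of `z` to the `B`-orthogonal of `span {u, w}`, along `span {u, w}`
  set b := z + (w ⬝ᵥ B *ᵥ z) • u - (u ⬝ᵥ B *ᵥ z) • w
  have hb : ∀ x, x ⬝ᵥ B *ᵥ b =
      x ⬝ᵥ B *ᵥ z + (w ⬝ᵥ B *ᵥ z) * x ⬝ᵥ B *ᵥ u - (u ⬝ᵥ B *ᵥ z) * x ⬝ᵥ B *ᵥ w := fun x => by
    simp only [b, mulVec_add, mulVec_sub, mulVec_smul, dotProduct_add, dotProduct_sub,
      dotProduct_smul, smul_eq_mul]
  have hub : u ⬝ᵥ B *ᵥ b = 0 := by rw [hb, self, huw]; ring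
  have hwb : w ⬝ᵥ B *ᵥ b = 0 := by rw [hb, self, swap u w, huw]; ring
  have hab : a ⬝ᵥ B *ᵥ b = 1 := by rw [hb, swap u a, swap w a, hua, hwa, haz]; ring
  set M := (of ![u, w, a, b])ᵀ
  have hJ : Mᵀ * B * M = !![0, 1, 0, 0; -1, 0, 0, 0; 0, 0, 0, 1; 0, 0, -1, 0] := by
    have hrow : ∀ i, Mᵀ i = ![u, w, a, b] i := fun i => rfl
    ext i j
    rw [mul_mul_apply, hrow, hrow]
    fin_cases i <;> fin_cases j <;>
      simp [self, huw, hua, hwa, hub, hwb, hab, swap u w, swap u a, swap u b, swap w a,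
        swap w b, swap a b]
  refine ⟨M, fun h0 => ?_, rfl, hJ⟩
  have := congrArg det hJ
  simp [det_succ_row_zero, Fin.sum_univ_succ, Fin.succAbove, h0] at this

end Matrix

lemma IsContactCurve.dotProduct_mulVec_derivative_eq_zero {B : Matrix (Fin 4) (Fin 4) ℂ}
    (hB : Bᵀ = -B) {F : Fin 4 → ℂ[X]} (hF : IsContactCurve B F) :
    F ⬝ᵥ B.map C *ᵥ (derivative ∘ F) = 0 := by
  have hskew : ∀ i j, B j i = -B i j := fun i j => by simpa using congrFun (congrFun hB i) j
  have hdiag : ∀ i, B i i = 0 := fun i => by linear_combination hskew i i / 2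
  rw [IsContactCurve, Finset.sum_filter, Fintype.sum_prod_type] at hF
  simp only [minor4, Fin.sum_univ_four, not_lt_zero, ↓reduceIte, Fin.lt_one_iff, Nat.reduceAdd,
    zero_add, Fin.reduceLT, one_ne_zero, Fin.reduceEq, lt_self_iff_false, add_zero] at hF
  simp only [dotProduct, mulVec, Fin.sum_univ_four, map_apply, Function.comp_apply, hdiag,
    hskew 0 1, hskew 0 2, hskew 0 3, hskew 1 2, hskew 1 3, hskew 2 3, map_neg, map_zero]
  linear_combination hF

lemma IsContactCurve.wronskian_add_wronskian_eq_zero {B M : Matrix (Fin 4) (Fin 4) ℂ}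
    (hB : Bᵀ = -B) (hJ : Mᵀ * B * M = !![0, 1, 0, 0; -1, 0, 0, 0; 0, 0, 0, 1; 0, 0, -1, 0])
    {G : Fin 4 → ℂ[X]} (hF : IsContactCurve B (M.map C *ᵥ G)) :
    wronskian (G 0) (G 1) + wronskian (G 2) (G 3) = 0 := by
  have h := hF.dotProduct_mulVec_derivative_eq_zero hB
  rw [derivative_comp_mulVec_map_C, mulVec_dotProduct_mulVec_mulVec, ← transpose_map,
    ← Matrix.map_mul, ← Matrix.map_mul, hJ] at h
  simp only [dotProduct, mulVec, map_apply, of_apply, cons_val', cons_val_fin_one,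
    Function.comp_apply, Fin.sum_univ_four, cons_val_zero, cons_val_one, cons_val, map_zero,
    zero_mul, map_one, one_mul, zero_add, add_zero, map_neg, neg_mul, mul_neg] at h
  rw [wronskian, wronskian]
  linear_combination h

lemma finrank_span_le_two_of_not_linearIndependent {B : Matrix (Fin 4) (Fin 4) ℂ}
    (hB : Bᵀ = -B) (hdet : B.det ≠ 0) {F : Fin 4 → ℂ[X]} (hF : IsContactCurve B F)
    (hdep : ¬ LinearIndependent ℂ F) :
    Module.finrank ℂ (Submodule.span ℂ (Set.range F)) ≤ 2 := by
  obtain ⟨g, hg, i, hi⟩ := Fintype.not_linearIndependent_iff.mp hdep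
  have hB' : IsUnit B.det := isUnit_iff_ne_zero.mpr hdet
  have hgu : g = (g ᵥ* B⁻¹) ᵥ* B := by rw [vecMul_vecMul, nonsing_inv_mul _ hB', vecMul_one]
  have hu : g ᵥ* B⁻¹ ≠ 0 := fun h => hi (by rw [hgu, h, zero_vecMul, Pi.zero_apply])
  obtain ⟨M, hM, hMu, hJ⟩ := exists_symplectic_basis_fin_four hB hdet hu
  obtain ⟨G, rfl⟩ : ∃ G, F = M.map C *ᵥ G := ⟨(M⁻¹).map C *ᵥ F, by
    rw [mulVec_mulVec, ← Matrix.map_mul, mul_nonsing_inv _ (isUnit_iff_ne_zero.mpr hM),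
      Matrix.map_one _ (map_zero C) (map_one C), one_mulVec]⟩
  have hgM : g ᵥ* M = ![0, 1, 0, 0] := by
    rw [hgu, ← hMu, vecMul_vecMul, ← mul_apply_eq_vecMul, ← Matrix.mul_assoc, hJ]
    ext j
    fin_cases j <;> rfl
  have hG₁ : G 1 = 0 := by
    have h : (C ∘ g) ⬝ᵥ M.map C *ᵥ G = 0 := by simpa [dotProduct, smul_eq_C_mul] using hg
    have hgM' : (C ∘ g) ᵥ* M.map C = C ∘ ![0, 1, 0, 0] := by
      ext j
      rw [← RingHom.map_vecMul, hgM, Function.comp_apply]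
    rw [dotProduct_mulVec, hgM'] at h
    simpa [dotProduct, Fin.sum_univ_four] using h
  have hW := hF.wronskian_add_wronskian_eq_zero hB hJ
  rw [hG₁, wronskian_zero_right, zero_add] at hW
  have := FiniteDimensional.span_of_finite ℂ (Set.finite_range G)
  exact (Submodule.finrank_mono (span_range_mulVec_map_C_le M G)).trans
    (finrank_span_range_le_two_of_wronskian_eq_zero hG₁ hW)

theorem contact_curve_degree_ge_three_general (B : Matrix (Fin 4) (Fin 4) ℂ)
    (halt : Bᵀ = -B) (hdet : B.det ≠ 0)
    (F : Fin 4 → ℂ[X]) (hcontact : IsContactCurve B F)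
    (hspan : 3 ≤ Module.finrank ℂ ↥(Submodule.span ℂ (Set.range F))) :
    LinearIndependent ℂ F ∧
    3 ≤ Finset.univ.sup (fun i => (F i).natDegree) ∧
    (Finset.univ.sup (fun i => (F i).natDegree) = 3 →
      ∃ A : Matrix (Fin 4) (Fin 4) ℂ, A.det ≠ 0 ∧
        ∀ i, F i = ∑ j : Fin 4, C (A i j) * X ^ (j : ℕ)) := by
  have hF : LinearIndependent ℂ F := by
    by_contra hdep
    have := finrank_span_le_two_of_not_linearIndependent halt hdet hcontact hdep
    omega
  set d := Finset.univ.sup fun i => (F i).natDegree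
  have hmem : ∀ i, F i ∈ degreeLT ℂ (d + 1) := fun i => by
    rw [degreeLT_succ_eq_degreeLE, mem_degreeLE]
    exact degree_le_of_natDegree_le (Finset.le_sup (f := fun i => (F i).natDegree) (by simp))
  refine ⟨hF, by simpa using hF.card_le_of_mem_degreeLT hmem, fun hd => ?_⟩
  rw [hd] at hmem
  exact ⟨_, ((isUnit_iff_isUnit_det _).mp (hF.isUnit_coeff_matrix hmem)).ne_zero,
    fun i => eq_sum_C_coeff_mul_X_pow_of_mem_degreeLT (hmem i)⟩

/-- A nonlinear contact curve in `P³` is nondegenerate and has degree at least `3`; 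
in degree `3` it is a rational normal curve. -/
theorem contact_curve_degree_ge_three (B : Matrix (Fin 4) (Fin 4) ℂ)
    (halt : Bᵀ = -B) (hdet : B.det ≠ 0)
    (F : Fin 4 → ℂ[X]) (hcontact : IsContactCurve B F)
    (hgcd : Finset.univ.gcd F = 1)
    (hspan : 3 ≤ Module.finrank ℂ ↥(Submodule.span ℂ (Set.range F))) :
    LinearIndependent ℂ F ∧
    3 ≤ Finset.univ.sup (fun i => (F i).natDegree) ∧
    (Finset.univ.sup (fun i => (F i).natDegree) = 3 →
      ∃ A : Matrix (Fin 4) (Fin 4) ℂ, A.det ≠ 0 ∧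
        ∀ i, F i = ∑ j : Fin 4, C (A i j) * X ^ (j : ℕ)) :=
  contact_curve_degree_ge_three_general B halt hdet F hcontact hspan
end

section
/- All contact rational normal curves are symplectically equivalent: let β be a nondegenerate alternating bilinear form on ℂ⁴ and let F, G : Fin 4 → ℂ[X] both be contact curves for β with gcd of components equal to 1, degree 3, and ℂ-linearly independent components. Then there exist S ∈ GL(4,ℂ) and c ∈ ℂ, c ≠ 0, with β(Su,Sv) = c·β(u,v) for all u,v ∈ ℂ⁴, and p,q,r,s ∈ ℂ with ps − qr ≠ 0, such that G_i = Σ_j S_{ij}·F_j^{[3]} for all i, where F_j^{[3]} = Σ_{k=0}^{3} (coeff of X^k in F_j)·(pX+q)^k·(rX+s)^{3−k} is the degree-3 Möbius transform of F_j. -/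
open Polynomial Matrix

/-- The degree-`n` Möbius transform of `P`, i.e. the reparametrization of `P` by 
the Möbius map `(pX+q)/(rX+s)` with denominators cleared. -/
noncomputable def moebius (n : ℕ) (p q r s : ℂ) (P : ℂ[X]) : ℂ[X] :=
  ∑ k ∈ Finset.range (n + 1),
    C (P.coeff k) * (C p * X + C q) ^ k * (C r * X + C s) ^ (n - k)

noncomputable def phiSum (A : Matrix (Fin 4) (Fin 4) ℂ) (F : Fin 4 → ℂ[X]) : ℂ[X] :=
  ∑ i, ∑ j, C (A i j) * (F i * derivative (F j))

noncomputable def stdFam : Fin 4 → ℂ[X] := ![1, X, X ^ 2, X ^ 3]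

lemma phi_comp (S A : Matrix (Fin 4) (Fin 4) ℂ) (F : Fin 4 → ℂ[X]) :
    phiSum A (fun i => ∑ j, C (S i j) * F j) = phiSum (Sᵀ * A * S) F := by
  unfold phiSum
  simp only [Matrix.mul_apply, Matrix.transpose_apply, map_sum, derivative_mul, derivative_C,
    zero_mul, zero_add, Finset.mul_sum, Finset.sum_mul, _root_.map_mul]
  rw [Finset.sum_comm]
  conv_lhs => enter [2]; ext j; rw [Finset.sum_comm]
  conv_lhs => enter [2]; ext j; enter [2]; ext l; rw [Finset.sum_comm]
  rw [Finset.sum_comm]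
  conv_lhs => enter [2]; ext l; rw [Finset.sum_comm]
  rw [Finset.sum_comm]
  apply Finset.sum_congr rfl; intro k _
  apply Finset.sum_congr rfl; intro l _
  apply Finset.sum_congr rfl; intro j _
  apply Finset.sum_congr rfl; intro i _
  ring

lemma contact_eq_phi (A : Matrix (Fin 4) (Fin 4) ℂ) (halt : Aᵀ = -A) (F : Fin 4 → ℂ[X]) :
    (∑ p ∈ Finset.univ.filter (fun p : Fin 4 × Fin 4 => p.1 < p.2),
      C (A p.1 p.2) * minor4 F p.1 p.2) = phiSum A F := by
  have hA : ∀ i j, A j i = -A i j := by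
    intro i j
    simpa [Matrix.transpose_apply] using congrFun (congrFun halt i) j
  have hd : ∀ i, A i i = 0 := fun i => by have h := hA i i; linear_combination h / 2
  unfold phiSum minor4
  rw [Finset.sum_filter, ← Finset.univ_product_univ, Finset.sum_product]
  simp only [Fin.sum_univ_four]
  simp only [Fin.reduceLT, Fin.reduceEq, reduceIte, if_true, if_false, add_zero, zero_add]
  simp only [hd, hA 0 1, hA 0 2, hA 0 3, hA 1 2, hA 1 3, hA 2 3, map_neg, map_zero]
  ring

lemma kernel_lemma (A : Matrix (Fin 4) (Fin 4) ℂ) (halt : Aᵀ = -A)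
    (h : phiSum A stdFam = 0) :
    A 0 1 = 0 ∧ A 0 2 = 0 ∧ A 1 2 = -(3 * A 0 3) ∧ A 1 3 = 0 ∧ A 2 3 = 0 := by
  have hA : ∀ i j, A j i = -A i j := by
    intro i j
    simpa [Matrix.transpose_apply] using congrFun (congrFun halt i) j
  have hd : ∀ i, A i i = 0 := fun i => by have h := hA i i; linear_combination h / 2
  unfold phiSum stdFam at h
  simp only [Fin.sum_univ_four, Matrix.cons_val_zero, Matrix.cons_val_one, Matrix.head_cons,
    Matrix.cons_val_two, Matrix.cons_val_three, Matrix.tail_cons, derivative_one, derivative_X,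
    derivative_X_pow, hd, hA 0 1, hA 0 2, hA 0 3, hA 1 2, hA 1 3, hA 2 3, map_neg] at h
  have v0 := congrArg (eval 0) h
  have v1 := congrArg (eval 1) h
  have vm1 := congrArg (eval (-1)) h
  have v2 := congrArg (eval 2) h
  have vm2 := congrArg (eval (-2)) h
  simp only [eval_add, eval_mul, eval_neg, eval_pow, eval_C, eval_X, eval_one, eval_zero,
    eval_natCast, eval_ofNat] at v0 v1 vm1 v2 vm2
  norm_num at v0 v1 vm1 v2 vm2
  refine ⟨?_, ?_, ?_, ?_, ?_⟩
  · linear_combination v0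
  · linear_combination (8*v1 - 8*vm1 - v2 + vm2)/24
  · linear_combination (2/3)*v1 + (2/3)*vm1 - v2/24 - vm2/24 - (5/4)*v0
  · linear_combination (v2 - vm2 - 2*v1 + 2*vm1)/24
  · linear_combination -v1/6 - vm1/6 + v2/24 + vm2/24 + v0/4

lemma expand3 (P : ℂ[X]) (h : P.natDegree ≤ 3) :
    P = C (P.coeff 0) * 1 + C (P.coeff 1) * X + C (P.coeff 2) * X ^ 2 + C (P.coeff 3) * X ^ 3 := by
  have h4 : P.natDegree < 4 := lt_of_le_of_lt h (by norm_num)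
  conv_lhs => rw [P.as_sum_range' 4 h4]
  simp [Finset.sum_range_succ, ← C_mul_X_pow_eq_monomial]

lemma expand3' (P : ℂ[X]) (h : P.natDegree ≤ 3) :
    P = ∑ k : Fin 4, C (P.coeff (k : ℕ)) * stdFam k := by
  rw [Fin.sum_univ_four]
  unfold stdFam
  simpa using expand3 P h

lemma coef_det_ne_zero (F : Fin 4 → ℂ[X]) (hdeg : ∀ i, (F i).natDegree ≤ 3)
    (hind : LinearIndependent ℂ F) :
    (Matrix.of (fun i k : Fin 4 => (F i).coeff (k : ℕ))).det ≠ 0 := by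
  have hu : IsUnit (Matrix.of (fun i k : Fin 4 => (F i).coeff (k : ℕ))) := by
    rw [← Matrix.linearIndependent_rows_iff_isUnit, Fintype.linearIndependent_iff]
    intro c hc k
    rw [Fintype.linearIndependent_iff] at hind
    apply hind c _ k
    have hco : ∀ n : Fin 4, (∑ i, c i • F i).coeff (n : ℕ) = 0 := by
      intro n
      have := congrFun hc n
      simpa [Polynomial.finset_sum_coeff, Polynomial.coeff_smul, smul_eq_mul] using this
    have hdeg' : (∑ i, c i • F i).natDegree ≤ 3 :=
      le_trans (Polynomial.natDegree_sum_le _ _) (by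
        simp only [Finset.fold_max_le]
        exact ⟨by norm_num, fun i _ => le_trans (Polynomial.natDegree_smul_le _ _) (hdeg i)⟩)
    rw [expand3 _ hdeg']
    have h0 := hco 0; have h1 := hco 1; have h2 := hco 2; have h3 := hco 3
    norm_num at h0 h1 h2 h3
    have h3' : ∑ x : Fin 4, c x * (F x).coeff 3 = 0 := h3
    simp [h0, h1, h2, h3', ← C_mul, ← map_sum]
  exact fun hzero => by simpa [hzero] using (Matrix.isUnit_iff_isUnit_det _).mp hu

lemma moebius_id (P : ℂ[X]) (h : P.natDegree ≤ 3) : moebius 3 1 0 0 1 P = P := by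
  unfold moebius
  simp only [map_zero, Polynomial.C_1, one_mul, zero_mul, zero_add, add_zero, one_pow, mul_one]
  rw [Finset.sum_range_succ, Finset.sum_range_succ, Finset.sum_range_succ, Finset.sum_range_succ]
  simp only [Finset.sum_range_zero, zero_add, pow_zero, pow_one, mul_one]
  conv_rhs => rw [expand3 P h]
  ring

lemma comb_eq (S M : Matrix (Fin 4) (Fin 4) ℂ) (i : Fin 4) (F : Fin 4 → ℂ[X])
    (hF : ∀ j, F j = ∑ k, C (M j k) * stdFam k) :
    ∑ j, C (S i j) * F j = ∑ k, C ((S * M) i k) * stdFam k := by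
  calc ∑ j, C (S i j) * F j = ∑ j, ∑ k, C (S i j) * (C (M j k) * stdFam k) := by
        refine Finset.sum_congr rfl fun j _ => ?_
        rw [hF j, Finset.mul_sum]
    _ = ∑ k, ∑ j, C (S i j) * (C (M j k) * stdFam k) := Finset.sum_comm
    _ = ∑ k, C ((S * M) i k) * stdFam k := by
        refine Finset.sum_congr rfl fun k _ => ?_
        rw [Matrix.mul_apply, map_sum, Finset.sum_mul]
        refine Finset.sum_congr rfl fun j _ => ?_
        rw [_root_.map_mul]; ring

/-- All contact rational normal curves are symplectically equivalent. -/
theorem contact_rational_normal_curves_equivalent (B : Matrix (Fin 4) (Fin 4) ℂ)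
    (halt : Bᵀ = -B) (hdet : B.det ≠ 0)
    (F G : Fin 4 → ℂ[X])
    (hFcontact : IsContactCurve B F) (hGcontact : IsContactCurve B G)
    (hFgcd : Finset.univ.gcd F = 1) (hGgcd : Finset.univ.gcd G = 1)
    (hFdeg : Finset.univ.sup (fun i => (F i).natDegree) = 3)
    (hGdeg : Finset.univ.sup (fun i => (G i).natDegree) = 3)
    (hFind : LinearIndependent ℂ F) (hGind : LinearIndependent ℂ G) :
    ∃ (S : Matrix (Fin 4) (Fin 4) ℂ) (c : ℂ) (p q r s : ℂ),
      S.det ≠ 0 ∧ c ≠ 0 ∧ Sᵀ * B * S = c • B ∧ p * s - q * r ≠ 0 ∧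
      ∀ i, G i = ∑ j : Fin 4, C (S i j) * moebius 3 p q r s (F j) := by
  have hF3 : ∀ i, (F i).natDegree ≤ 3 := fun i =>
    hFdeg ▸ Finset.le_sup (f := fun i => (F i).natDegree) (Finset.mem_univ i)
  have hG3 : ∀ i, (G i).natDegree ≤ 3 := fun i =>
    hGdeg ▸ Finset.le_sup (f := fun i => (G i).natDegree) (Finset.mem_univ i)
  set M : Matrix (Fin 4) (Fin 4) ℂ := Matrix.of (fun i k : Fin 4 => (F i).coeff (k : ℕ)) with hMdef
  set N : Matrix (Fin 4) (Fin 4) ℂ := Matrix.of (fun i k : Fin 4 => (G i).coeff (k : ℕ)) with hNdef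
  have hM : M.det ≠ 0 := coef_det_ne_zero F hF3 hFind
  have hN : N.det ≠ 0 := coef_det_ne_zero G hG3 hGind
  have hMu : IsUnit M.det := isUnit_iff_ne_zero.2 hM
  have hFexp : ∀ j, F j = ∑ k, C (M j k) * stdFam k := fun j => expand3' (F j) (hF3 j)
  have hGexp : ∀ j, G j = ∑ k, C (N j k) * stdFam k := fun j => expand3' (G j) (hG3 j)
  -- phiSum vanishing
  have hphiF : phiSum B F = 0 := by rw [← contact_eq_phi B halt F]; exact hFcontact
  have hphiG : phiSum B G = 0 := by rw [← contact_eq_phi B halt G]; exact hGcontact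
  have hFfun : (fun i => ∑ j, C (M i j) * stdFam j) = F := funext fun i => (hFexp i).symm
  have hGfun : (fun i => ∑ j, C (N i j) * stdFam j) = G := funext fun i => (hGexp i).symm
  have hphi1 : phiSum (Mᵀ * B * M) stdFam = 0 := by
    rw [← phi_comp M B stdFam, hFfun, hphiF]
  have hphi2 : phiSum (Nᵀ * B * N) stdFam = 0 := by
    rw [← phi_comp N B stdFam, hGfun, hphiG]
  set B1 := Mᵀ * B * M with hB1def
  set B2 := Nᵀ * B * N with hB2def
  have halt1 : B1ᵀ = -B1 := by
    rw [hB1def]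
    simp [Matrix.transpose_mul, Matrix.transpose_transpose, halt, Matrix.mul_assoc]
  have halt2 : B2ᵀ = -B2 := by
    rw [hB2def]
    simp [Matrix.transpose_mul, Matrix.transpose_transpose, halt, Matrix.mul_assoc]
  obtain ⟨k11, k12, k13, k14, k15⟩ := kernel_lemma B1 halt1 hphi1
  obtain ⟨k21, k22, k23, k24, k25⟩ := kernel_lemma B2 halt2 hphi2
  have hA1 : ∀ i j, B1 j i = -B1 i j := by
    intro i j; simpa [Matrix.transpose_apply] using congrFun (congrFun halt1 i) j
  have hA2 : ∀ i j, B2 j i = -B2 i j := by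
    intro i j; simpa [Matrix.transpose_apply] using congrFun (congrFun halt2 i) j
  have hd1 : ∀ i, B1 i i = 0 := fun i => by have h := hA1 i i; linear_combination h / 2
  have hd2 : ∀ i, B2 i i = 0 := fun i => by have h := hA2 i i; linear_combination h / 2
  have hdetB1 : B1.det ≠ 0 := by
    rw [hB1def, Matrix.det_mul, Matrix.det_mul, Matrix.det_transpose]
    exact mul_ne_zero (mul_ne_zero hM hdet) hM
  have hdetB2 : B2.det ≠ 0 := by
    rw [hB2def, Matrix.det_mul, Matrix.det_mul, Matrix.det_transpose]
    exact mul_ne_zero (mul_ne_zero hN hdet) hN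
  have hb : B1 0 3 ≠ 0 := by
    intro hb0
    apply hdetB1
    have : B1 = 0 := by
      ext i j
      fin_cases i <;> fin_cases j <;>
        simp [hd1, k11, k12, k13, k14, k15, hb0, hA1 0 1, hA1 0 2, hA1 0 3, hA1 1 2,
          hA1 1 3, hA1 2 3]
    rw [this]
    simp
  have hb' : B2 0 3 ≠ 0 := by
    intro hb0
    apply hdetB2
    have : B2 = 0 := by
      ext i j
      fin_cases i <;> fin_cases j <;>
        simp [hd2, k21, k22, k23, k24, k25, hb0, hA2 0 1, hA2 0 2, hA2 0 3, hA2 1 2,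
          hA2 1 3, hA2 2 3]
    rw [this]
    simp
  set c : ℂ := B2 0 3 / B1 0 3 with hcdef
  have hc : c ≠ 0 := div_ne_zero hb' hb
  have hprop : B2 = c • B1 := by
    ext i j
    fin_cases i <;> fin_cases j <;>
      simp [Matrix.smul_apply, hd1, hd2, k11, k12, k13, k14, k15, k21, k22, k23, k24, k25,
        hA1 0 1, hA1 0 2, hA1 0 3, hA1 1 2, hA1 1 3, hA1 2 3,
        hA2 0 1, hA2 0 2, hA2 0 3, hA2 1 2, hA2 1 3, hA2 2 3, hcdef] <;>
      field_simp <;> ring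
  set S : Matrix (Fin 4) (Fin 4) ℂ := N * M⁻¹ with hSdef
  have hSM : S * M = N := by
    rw [hSdef, Matrix.mul_assoc, Matrix.nonsing_inv_mul M hMu, Matrix.mul_one]
  have hdetS : S.det ≠ 0 := by
    rw [hSdef, Matrix.det_mul, Matrix.det_nonsing_inv]
    simp only [Ring.inverse_eq_inv]
    exact mul_ne_zero hN (inv_ne_zero hM)
  have hMMi : M * M⁻¹ = 1 := Matrix.mul_nonsing_inv M hMu
  have hsymp : Sᵀ * B * S = c • B := by
    have h1 : Sᵀ * B * S = (M⁻¹)ᵀ * B2 * M⁻¹ := by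
      rw [hSdef, hB2def]
      simp [Matrix.transpose_mul, Matrix.mul_assoc]
    rw [h1, hprop, hB1def]
    have h2 : (M⁻¹)ᵀ * Mᵀ = 1 := by rw [← Matrix.transpose_mul, hMMi, Matrix.transpose_one]
    calc (M⁻¹)ᵀ * (c • (Mᵀ * B * M)) * M⁻¹
        = c • ((M⁻¹)ᵀ * Mᵀ * (B * (M * M⁻¹))) := by
          rw [Matrix.mul_smul, Matrix.smul_mul]
          congr 1
          simp [Matrix.mul_assoc]
      _ = c • B := by rw [h2, hMMi, Matrix.one_mul, Matrix.mul_one]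
  refine ⟨S, c, 1, 0, 0, 1, hdetS, hc, hsymp, by norm_num, fun i => ?_⟩
  have : ∀ j, moebius 3 1 0 0 1 (F j) = F j := fun j => moebius_id (F j) (hF3 j)
  simp only [this]
  rw [comb_eq S M i F hFexp, hSM, ← hGexp i]
end

section
/- Completion of a null curve in ℂ³ with simple poles: let D ∈ ℂ[X] be monic, squarefree, of degree d ≥ 1, and P₁, P₂, P₃ ∈ ℂ[X] with natDegree(P_i) ≤ d, with gcd(D, gcd(P₁,P₂,P₃)) = 1, satisfying the null condition Σ_{i=1}^{3} (P_i'·D − P_i·D')² = 0. Then D divides P₁² + P₂² + P₃², and the tuple G = (D, P₁, P₂, P₃, (P₁²+P₂²+P₃²)/D) of five polynomials satisfies G₀·G₄ − G₁² − G₂² − G₃² = 0 and G₀'·G₄' − (G₁')² − (G₂')² − (G₃')² = 0, has gcd(G₀,…,G₄) = 1, and max_a natDegree(G_a) = d. Moreover, if every common root of P₁'D−P₁D', P₂'D−P₂D', P₃'D−P₃D' is a root of D, then the ten minors G_a·G_b' − G_b·G_a' (0 ≤ a < b ≤ 4) have no common root in ℂ. -/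
open Polynomial

/-- Completion of a meromorphic null curve `(P₁/D, P₂/D, P₃/D) : P¹ ⇢ ℂ³` with 
simple poles to an algebraic null curve of degree `d` in the quadric `Q³ ⊂ P⁴`; 
if the affine curve is an immersion away from its poles, then the completed 
curve is an immersion at all finite points. -/
theorem completion_of_null_curve (D : ℂ[X]) (P : Fin 3 → ℂ[X]) (d : ℕ)
    (hdd : d = D.natDegree) (hd1 : 1 ≤ d)
    (hmonic : D.Monic) (hsf : Squarefree D)
    (hdeg : ∀ i, (P i).natDegree ≤ d)
    (hgcd : gcd D (gcd (P 0) (gcd (P 1) (P 2))) = 1)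
    (hnull : ∑ i : Fin 3, (derivative (P i) * D - P i * derivative D) ^ 2 = 0) :
    D ∣ (P 0) ^ 2 + (P 1) ^ 2 + (P 2) ^ 2 ∧
    ∃ Q : ℂ[X], (P 0) ^ 2 + (P 1) ^ 2 + (P 2) ^ 2 = D * Q ∧
      ∀ G : Fin 5 → ℂ[X], G = ![D, P 0, P 1, P 2, Q] →
        (G 0 * G 4 - G 1 ^ 2 - G 2 ^ 2 - G 3 ^ 2 = 0 ∧
         derivative (G 0) * derivative (G 4) - derivative (G 1) ^ 2 -
           derivative (G 2) ^ 2 - derivative (G 3) ^ 2 = 0) ∧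
        Finset.univ.gcd G = 1 ∧
        Finset.univ.sup (fun a => (G a).natDegree) = d ∧
        ((∀ z : ℂ,
            (∀ i, eval z (derivative (P i) * D - P i * derivative D) = 0) →
            eval z D = 0) →
          ∀ z : ℂ, ∃ p ∈ pairs5, eval z (minor5 G p) ≠ 0) := by
  have hD0 : D ≠ 0 := hmonic.ne_zero
  have hcop : IsCoprime D (derivative D) :=
    (PerfectField.separable_iff_squarefree.mpr hsf)
  simp only [Fin.sum_univ_three] at hnull
  have key : (derivative D)^2 * ((P 0)^2+(P 1)^2+(P 2)^2)
      = D * (2*derivative D*((P 0)*derivative (P 0) + (P 1)*derivative (P 1)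
            + (P 2)*derivative (P 2))
          - D*((derivative (P 0))^2+(derivative (P 1))^2+(derivative (P 2))^2)) := by
    linear_combination hnull
  have hdvd : D ∣ (P 0)^2+(P 1)^2+(P 2)^2 :=
    ((hcop.pow_right (n := 2)).dvd_of_dvd_mul_left ⟨_, key⟩)
  refine ⟨hdvd, ?_⟩
  obtain ⟨Q, hQ⟩ := hdvd
  refine ⟨Q, hQ, ?_⟩
  intro G hG
  subst hG
  have e0 : (![D, P 0, P 1, P 2, Q] : Fin 5 → ℂ[X]) 0 = D := rfl
  have e1 : (![D, P 0, P 1, P 2, Q] : Fin 5 → ℂ[X]) 1 = P 0 := rfl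
  have e2 : (![D, P 0, P 1, P 2, Q] : Fin 5 → ℂ[X]) 2 = P 1 := rfl
  have e3 : (![D, P 0, P 1, P 2, Q] : Fin 5 → ℂ[X]) 3 = P 2 := rfl
  have e4 : (![D, P 0, P 1, P 2, Q] : Fin 5 → ℂ[X]) 4 = Q := rfl
  have h3 := congrArg derivative hQ
  simp only [derivative_add, derivative_mul, derivative_pow, Nat.cast_ofNat,
    map_ofNat, pow_one] at h3
  have key2 : D^2 * (derivative D * derivative Q - (derivative (P 0))^2
      - (derivative (P 1))^2 - (derivative (P 2))^2) = 0 := by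
    linear_combination -hnull + (derivative D)^2 * hQ - D * derivative D * h3
  have hder : derivative D * derivative Q - (derivative (P 0))^2
      - (derivative (P 1))^2 - (derivative (P 2))^2 = 0 :=
    (mul_eq_zero.mp key2).resolve_left (pow_ne_zero 2 hD0)
  refine ⟨⟨?_, ?_⟩, ?_, ?_, ?_⟩
  · rw [e0, e1, e2, e3, e4]; linear_combination -hQ
  · rw [e0, e1, e2, e3, e4]; exact hder
  · -- gcd = 1
    have h1 : Finset.univ.gcd (![D, P 0, P 1, P 2, Q] : Fin 5 → ℂ[X]) ∣ 1 := by
      rw [← hgcd]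
      refine dvd_gcd (e0 ▸ Finset.gcd_dvd (Finset.mem_univ 0))
        (dvd_gcd (e1 ▸ Finset.gcd_dvd (Finset.mem_univ 1))
          (dvd_gcd (e2 ▸ Finset.gcd_dvd (Finset.mem_univ 2))
            (e3 ▸ Finset.gcd_dvd (Finset.mem_univ 3))))
    rw [← Finset.normalize_gcd]
    exact normalize_eq_one.mpr (isUnit_of_dvd_one h1)
  · -- sup of degrees = d
    have hQdeg : Q.natDegree ≤ d := by
      by_cases hQ0 : Q = 0
      · simp [hQ0]
      · have h2d : ((P 0)^2+(P 1)^2+(P 2)^2).natDegree ≤ 2*d := by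
          refine le_trans (natDegree_add_le _ _) (max_le
            (le_trans (natDegree_add_le _ _) (max_le ?_ ?_)) ?_) <;>
          · rw [natDegree_pow]; exact Nat.mul_le_mul_left 2 (hdeg _)
        rw [hQ, natDegree_mul hD0 hQ0, ← hdd] at h2d
        omega
    refine le_antisymm (Finset.sup_le ?_) ?_
    · intro a _
      fin_cases a
      · exact le_of_eq hdd.symm
      · exact hdeg 0
      · exact hdeg 1
      · exact hdeg 2
      · exact hQdeg
    · exact le_trans (le_of_eq hdd)
        (Finset.le_sup (f := fun a => ((![D, P 0, P 1, P 2, Q] : Fin 5 → ℂ[X]) a).natDegree)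
          (Finset.mem_univ 0))
  · -- immersion
    intro himm z
    by_contra hcon
    push_neg at hcon
    have m1 := hcon (0, 1) (by decide)
    have m2 := hcon (0, 2) (by decide)
    have m3 := hcon (0, 3) (by decide)
    simp only [minor5, e0, e1, e2, e3, eval_sub, eval_mul] at m1 m2 m3
    have w0 : eval z (derivative (P 0) * D - P 0 * derivative D) = 0 := by
      simp only [eval_sub, eval_mul]; linear_combination m1
    have w1 : eval z (derivative (P 1) * D - P 1 * derivative D) = 0 := by
      simp only [eval_sub, eval_mul]; linear_combination m2
    have w2 : eval z (derivative (P 2) * D - P 2 * derivative D) = 0 := by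
      simp only [eval_sub, eval_mul]; linear_combination m3
    have hp : ∀ i, eval z (derivative (P i) * D - P i * derivative D) = 0 := by
      intro i
      fin_cases i
      · exact w0
      · exact w1
      · exact w2
    have hDz : eval z D = 0 := himm z hp
    have hD'z : eval z (derivative D) ≠ 0 := by
      obtain ⟨a, b, hab⟩ := hcop
      intro h0
      have := congrArg (eval z) hab
      simp [hDz, h0] at this
    have hPz : ∀ i, eval z (P i) = 0 := by
      intro i
      have := hp i
      simp only [eval_sub, eval_mul, hDz, mul_zero, zero_sub, neg_eq_zero] at this
      exact (mul_eq_zero.mp this).resolve_right hD'z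
    have hdvd1 : (X - C z) ∣ gcd D (gcd (P 0) (gcd (P 1) (P 2))) :=
      dvd_gcd (dvd_iff_isRoot.mpr hDz)
        (dvd_gcd (dvd_iff_isRoot.mpr (hPz 0))
          (dvd_gcd (dvd_iff_isRoot.mpr (hPz 1)) (dvd_iff_isRoot.mpr (hPz 2))))
    rw [hgcd] at hdvd1
    have := natDegree_eq_zero_of_isUnit (isUnit_of_dvd_one hdvd1)
    simp [natDegree_X_sub_C] at this
end

section
/- Order of the Wronskian: let k ≥ 1 and let h₁, …, h_k be nonzero formal power series over ℂ whose orders of vanishing ν₁ < ν₂ < … < ν_k are strictly increasing (and finite). Then the Wronskian W(h₁,…,h_k), defined as the determinant of the k×k matrix whose (i,j) entry is the (i−1)-st formal derivative of h_j, is a nonzero power series of order ν₁ + ν₂ + … + ν_k − k(k−1)/2. -/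
/-!
Multiplying the `i`-th row of the Wronskian matrix by `X ^ i` multiplies the determinant by
`X ^ (k(k-1)/2)`, and the new entries `X ^ i * h_j⁽ⁱ⁾` have `n`-th coefficient
`n(n-1)⋯(n-i+1)` times that of `h_j`. So every entry of column `j` has order at least `ν_j`, the
determinant has order at least `∑ ν_j`, and its coefficient there is the determinant of the
leading coefficients `ν_j(ν_j-1)⋯(ν_j-i+1) c_j`: up to the factor `∏ c_j ≠ 0`, a Vandermonde
determinant in the distinct `ν_j`, hence nonzero.
-/

open PowerSeries

/-- The Wronskian of `k` formal power series: the determinant of the `k × k` 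
matrix whose `(i,j)` entry is the `i`-th formal derivative of `h j`. -/
noncomputable def psWronskian {k : ℕ} (h : Fin k → PowerSeries ℂ) : PowerSeries ℂ :=
  Matrix.det (Matrix.of fun i j : Fin k => (⇑(PowerSeries.derivative ℂ))^[(i : ℕ)] (h j))

namespace PowerSeries

section Derivative

variable {R : Type*} [CommSemiring R]

theorem coeff_X_pow_mul_iterate_derivative (f : R⟦X⟧) (i n : ℕ) :
    coeff n (X ^ i * (d⁄dX R)^[i] f) = coeff n f * n.descFactorial i := by
  rw [coeff_X_pow_mul']
  split_ifs with hin
  · obtain ⟨m, rfl⟩ := Nat.exists_eq_add_of_le' hin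
    rw [Nat.add_sub_cancel, coeff_iterate_derivative, Nat.add_descFactorial_eq_ascFactorial,
      mul_comm]
  · simp [Nat.descFactorial_of_lt (not_le.mp hin)]

theorem order_le_order_X_pow_mul_iterate_derivative (f : R⟦X⟧) (i : ℕ) :
    f.order ≤ (X ^ i * (d⁄dX R)^[i] f).order :=
  le_order _ _ fun n hn => by
    rw [coeff_X_pow_mul_iterate_derivative, coeff_of_lt_order n hn, zero_mul]

end Derivative

variable {ι R : Type*} [Fintype ι] [DecidableEq ι] [CommRing R]

theorem order_det_eq_sum_of_le_order {M : Matrix ι ι R⟦X⟧} {ν : ι → ℕ}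
    (hM : ∀ i j, (ν j : ℕ∞) ≤ (M i j).order)
    (hdet : (Matrix.of fun i j => coeff (ν j) (M i j)).det ≠ 0) :
    M.det.order = ∑ j, (ν j : ℕ∞) := by
  obtain ⟨N, hN⟩ : ∃ N : Matrix ι ι R⟦X⟧, ∀ i j, M i j = X ^ ν j * N i j := by
    choose N hN using fun i j => X_pow_dvd_iff.mpr fun m (hm : m < ν j) =>
      coeff_of_lt_order m ((Nat.cast_lt.mpr hm).trans_le (hM i j))
    exact ⟨N, hN⟩
  have hM_det : M.det = X ^ (∑ j, ν j) * N.det := by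
    rw [← Finset.prod_pow_eq_pow_sum, ← Matrix.det_mul_row]
    exact congrArg Matrix.det (Matrix.ext hN)
  have hcoeff : (Matrix.of fun i j => coeff (ν j) (M i j)) = constantCoeff.mapMatrix N := by
    ext i j
    simpa [hN] using coeff_X_pow_mul (N i j) (ν j) 0
  rw [← Nat.cast_sum, hM_det, order_eq_nat]
  refine ⟨?_, fun m hm => ?_⟩
  · rwa [coeff_X_pow_mul', if_pos le_rfl, Nat.sub_self, coeff_zero_eq_constantCoeff_apply,
      RingHom.map_det, ← hcoeff]
  · rw [coeff_X_pow_mul', if_neg (not_le.mpr hm)]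

end PowerSeries

namespace Matrix

theorem det_descFactorial_eq_det_vandermonde {R : Type*} [CommRing R] [IsDomain R] {n : ℕ}
    (ν : Fin n → ℕ) :
    (of fun i j : Fin n => ((ν j).descFactorial i : R)).det =
      (vandermonde fun j => (ν j : R)).det := by
  rw [det_eval_matrixOfPolynomials_eq_det_vandermonde _ (fun i => descPochhammer R i)
    (fun i => descPochhammer_natDegree R i) (fun i => monic_descPochhammer R i), ← det_transpose]
  congr
  ext i j
  simp [descPochhammer_eval_eq_descFactorial]

theorem det_descFactorial_ne_zero {R : Type*} [CommRing R] [IsDomain R] [CharZero R] {n : ℕ}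
    {ν : Fin n → ℕ} (hν : Function.Injective ν) :
    (of fun i j : Fin n => ((ν j).descFactorial i : R)).det ≠ 0 := by
  rw [det_descFactorial_eq_det_vandermonde, det_vandermonde_ne_zero_iff]
  exact Nat.cast_injective.comp hν

end Matrix

theorem order_of_wronskian_general (k : ℕ) (h : Fin k → PowerSeries ℂ)
    (hne : ∀ i, h i ≠ 0)
    (hmono : StrictMono fun i => (h i).order) :
    psWronskian h ≠ 0 ∧
    (psWronskian h).order + (k * (k - 1) / 2 : ℕ) = ∑ i, (h i).order := by
  obtain ⟨ν, hν⟩ : ∃ ν : Fin k → ℕ, ∀ j, (ν j : ℕ∞) = (h j).order :=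
    ⟨_, fun j => coe_toNat_order (hne j)⟩
  have hν_mono : StrictMono ν := fun i j hij => by
    simpa only [← hν, Nat.cast_lt] using hmono hij
  let M : Matrix (Fin k) (Fin k) ℂ⟦X⟧ := .of fun i j => X ^ (i : ℕ) * (d⁄dX ℂ)^[i] (h j)
  have hM_det : M.det = X ^ (k * (k - 1) / 2) * psWronskian h := by
    rw [psWronskian, ← Finset.sum_range_id, ← Fin.sum_univ_eq_sum_range,
      ← Finset.prod_pow_eq_pow_sum, ← Matrix.det_mul_column]
    rfl
  have hM_order : M.det.order = ∑ j, (ν j : ℕ∞) := by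
    refine order_det_eq_sum_of_le_order
      (fun i j => (hν j).trans_le (order_le_order_X_pow_mul_iterate_derivative _ _)) ?_
    simp_rw [M, Matrix.of_apply, coeff_X_pow_mul_iterate_derivative]
    refine (Matrix.det_mul_row (fun j => coeff (ν j) (h j))
      (.of fun i j : Fin k => ((ν j).descFactorial i : ℂ))).trans_ne ?_
    exact mul_ne_zero (Finset.prod_ne_zero_iff.mpr fun j _ => (order_eq_nat.mp (hν j).symm).1)
      (Matrix.det_descFactorial_ne_zero hν_mono.injective)
  have hW : psWronskian h ≠ 0 := by
    rintro hW
    rw [hM_det, hW, mul_zero, order_zero, ← Nat.cast_sum] at hM_order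
    exact ENat.top_ne_natCast _ hM_order
  refine ⟨hW, ?_⟩
  rw [← Finset.sum_congr rfl fun j _ => hν j, ← hM_order, hM_det, order_mul, order_X_pow,
    add_comm]

/-- If `h₁, …, h_k` are nonzero power series with strictly increasing orders of 
vanishing `ν₁ < … < ν_k`, then their Wronskian is nonzero of order 
`ν₁ + … + ν_k − k(k−1)/2`. -/
theorem order_of_wronskian (k : ℕ) (hk : 1 ≤ k) (h : Fin k → PowerSeries ℂ)
    (hne : ∀ i, h i ≠ 0)
    (hmono : StrictMono fun i => (h i).order) :
    psWronskian h ≠ 0 ∧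
    (psWronskian h).order + (k * (k - 1) / 2 : ℕ) = ∑ i, (h i).order :=
  order_of_wronskian_general k h hne hmono
end

section
/- Order relation forced by the contact condition: let h₁, h₂, h₃ ∈ ℂ⟦X⟧ be formal power series with h₁, h₂ nonzero of finite orders a₁ = ord(h₁), a₂ = ord(h₂) satisfying 0 < a₁ < a₂, suppose the order of h₃ is positive (zero constant term), and suppose h₃' = h₂·h₁' − h₁·h₂'. Then h₃ ≠ 0 and ord(h₃) = a₁ + a₂. -/
/-!
Multiplying the contact equation by `X` turns it into `θ h₃ = h₂ θ h₁ - h₁ θ h₂` for the Euler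
operator `θ = X d/dX`, which multiplies the `n`-th coefficient by `n`. Hence `θ` preserves the order
of a series without constant term, and `θ h - ord(h) h` has order larger than `ord(h)`. So the right
side is `(a₁ - a₂) h₁ h₂` plus terms of order larger than `a₁ + a₂`, and `a₁ ≠ a₂` gives
`ord(h₃) = a₁ + a₂`.
-/

open PowerSeries

namespace PowerSeries

variable {R : Type*} [CommRing R]

theorem coeff_X_mul_derivative (f : R⟦X⟧) (n : ℕ) :
    coeff n (X * d⁄dX R f) = n * coeff n f := by
  cases n with
  | zero => simp
  | succ n => rw [coeff_succ_X_mul, coeff_derivative, mul_comm]; push_cast; rfl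

theorem order_X_mul_derivative [IsAddTorsionFree R] {f : R⟦X⟧} (hf : constantCoeff f = 0) :
    (X * d⁄dX R f).order = f.order := by
  have hcoeff : ∀ n, coeff n (X * d⁄dX R f) = 0 ↔ coeff n f = 0 := by
    rintro (_ | n)
    · simpa using hf
    · rw [coeff_X_mul_derivative, ← nsmul_eq_mul, nsmul_eq_zero_iff]
      simp
  exact le_antisymm (le_order _ _ fun i hi => (hcoeff i).mp (coeff_of_lt_order i hi))
    (le_order _ _ fun i hi => (hcoeff i).mpr (coeff_of_lt_order i hi))

theorem lt_order_X_mul_derivative_sub_nsmul {f : R⟦X⟧} {n : ℕ} (hf : n ≤ f.order) :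
    (n : ℕ∞) < (X * d⁄dX R f - n • f).order := by
  rw [← ENat.add_one_le_iff (ENat.natCast_ne_top n)]
  refine nat_le_order _ (n + 1) fun i hi => ?_
  rw [map_sub, coeff_X_mul_derivative, map_nsmul, nsmul_eq_mul]
  rcases (Nat.lt_succ_iff.mp hi).lt_or_eq with hlt | rfl
  · rw [coeff_of_lt_order i (lt_of_lt_of_le (by exact_mod_cast hlt) hf), mul_zero, mul_zero,
      sub_zero]
  · exact sub_self _

theorem add_lt_order_mul {φ ψ : R⟦X⟧} {m n : ℕ} (hφ : m ≤ φ.order) (hψ : n < ψ.order) :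
    (m + n : ℕ∞) < (φ * ψ).order :=
  calc (m + n : ℕ∞) < m + ψ.order := WithTop.add_lt_add_left (ENat.natCast_ne_top m) hψ
    _ ≤ φ.order + ψ.order := by gcongr
    _ ≤ (φ * ψ).order := le_order_mul φ ψ

theorem order_mul_X_mul_derivative_sub [IsDomain R] [CharZero R] {f g : R⟦X⟧} {a b : ℕ}
    (hf : f.order = a) (hg : g.order = b) (hab : a ≠ b) :
    (g * (X * d⁄dX R f) - f * (X * d⁄dX R g)).order = (a + b : ℕ∞) := by
  have hsplit : g * (X * d⁄dX R f) - f * (X * d⁄dX R g) = C ((a : R) - b) * (f * g) +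
      (g * (X * d⁄dX R f - a • f) + -(f * (X * d⁄dX R g - b • g))) := by
    simp only [nsmul_eq_mul, map_sub, map_natCast]
    ring
  have hlead : (C ((a : R) - b) * (f * g)).order = a + b := by
    rw [order_mul, order_mul, ← monomial_zero_eq_C,
      order_monomial_of_ne_zero _ _ (sub_ne_zero.mpr (Nat.cast_injective.ne hab)), hf, hg,
      Nat.cast_zero, zero_add]
  have hrest : (a + b : ℕ∞) <
      (g * (X * d⁄dX R f - a • f) + -(f * (X * d⁄dX R g - b • g))).order := by
    refine lt_of_lt_of_le (lt_min ?_ ?_) (min_order_le_order_add _ _)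
    · rw [add_comm]
      exact add_lt_order_mul hg.ge (lt_order_X_mul_derivative_sub_nsmul hf.ge)
    · rw [order_neg]
      exact add_lt_order_mul hf.ge (lt_order_X_mul_derivative_sub_nsmul hg.ge)
  rw [hsplit, order_add_of_order_ne _ _ (hlead.trans_lt hrest).ne, hlead]
  exact min_eq_left hrest.le

end PowerSeries

theorem order_add_of_contact_general (h₁ h₂ h₃ : PowerSeries ℂ)
    (h2ne : h₂ ≠ 0)
    (h12 : h₁.order < h₂.order)
    (h3const : PowerSeries.constantCoeff h₃ = 0)
    (heq : PowerSeries.derivative ℂ h₃ =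
      h₂ * PowerSeries.derivative ℂ h₁ - h₁ * PowerSeries.derivative ℂ h₂) :
    h₃ ≠ 0 ∧ h₃.order = h₁.order + h₂.order := by
  obtain ⟨a, ha⟩ := ENat.ne_top_iff_exists.mp (h12.trans_le le_top).ne
  obtain ⟨b, hb⟩ := ENat.ne_top_iff_exists.mp (order_eq_top.not.mpr h2ne)
  have hab : a ≠ b := by
    rintro rfl
    exact h12.ne (ha.symm.trans hb)
  have hord : h₃.order = a + b := by
    rw [← order_X_mul_derivative h3const, heq, show X * (h₂ * d⁄dX ℂ h₁ - h₁ * d⁄dX ℂ h₂) =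
      h₂ * (X * d⁄dX ℂ h₁) - h₁ * (X * d⁄dX ℂ h₂) by ring]
    exact order_mul_X_mul_derivative_sub ha.symm hb.symm hab
  refine ⟨fun h => ?_, by rw [hord, ← ha, ← hb]⟩
  rw [h, order_zero] at hord
  exact ENat.top_ne_natCast (a + b) hord

/-- Order relation forced by the contact condition `h₃' = h₂h₁' − h₁h₂'` (the 
curve `[1, h₁, h₂, h₃]` is tangent to the contact distribution of the symplectic 
form `ξ₀∧ξ₃ + ξ₁∧ξ₂`): if `0 < ord(h₁) < ord(h₂)` and `h₃` has zero constant 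
term, then `h₃ ≠ 0` and `ord(h₃) = ord(h₁) + ord(h₂)`. -/
theorem order_add_of_contact (h₁ h₂ h₃ : PowerSeries ℂ)
    (h1ne : h₁ ≠ 0) (h2ne : h₂ ≠ 0)
    (h1pos : 0 < h₁.order) (h12 : h₁.order < h₂.order)
    (h3const : PowerSeries.constantCoeff h₃ = 0)
    (heq : PowerSeries.derivative ℂ h₃ =
      h₂ * PowerSeries.derivative ℂ h₁ - h₁ * PowerSeries.derivative ℂ h₂) :
    h₃ ≠ 0 ∧ h₃.order = h₁.order + h₂.order :=
  order_add_of_contact_general h₁ h₂ h₃ h2ne h12 h3const heq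
end

section
/- Rational contact curves of every degree: let p, q be integers with 0 < p < q and let F = (1, X^p, X^q, X^{p+q}) : Fin 4 → ℂ[X]. Then F is a contact curve for the nondegenerate alternating bilinear form β on ℂ⁴ determined by β(e₀,e₃) = p − q, β(e₁,e₂) = p + q, and β(e₀,e₁) = β(e₀,e₂) = β(e₁,e₃) = β(e₂,e₃) = 0. Moreover the six minors of F are exactly W₀₁ = p·X^{p−1}, W₀₂ = q·X^{q−1}, W₀₃ = (p+q)·X^{p+q−1}, W₁₂ = (q−p)·X^{p+q−1}, W₁₃ = q·X^{2p+q−1}, W₂₃ = p·X^{p+2q−1}; in particular their gcd is X^{p−1} up to a nonzero constant and their maximal degree is p + 2q − 1 (so the total first ramification is (p−1) at 0 and (p−1) at infinity). -/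
open Polynomial Matrix

/-- The set of ordered index pairs `i < j` in `Fin 4`. -/
def pairs4 : Finset (Fin 4 × Fin 4) := Finset.univ.filter (fun p => p.1 < p.2)

/-
All four components are monomials, and the Wronskian of two monomials is again a monomial:
`X^a (X^b)' − X^b (X^a)' = (b − a) X^(a+b−1)`. With exponents `0, p, q, p + q` the only two
minors of the same degree are `W₀₃` and `W₁₂`, and the form pairs exactly these, with
coefficients chosen so that `(p − q)(p + q) + (p + q)(q − p) = 0`. All minors are divisible by
`W₀₁ = p X^(p−1)`, which gives the gcd, and `W₂₃` has the largest exponent.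
-/
theorem Polynomial.wronskian_X_pow {R : Type*} [CommRing R] (a b : ℕ) :
    wronskian (X ^ a : R[X]) (X ^ b) = C ((b : R) - a) * X ^ (a + b - 1) := by
  rcases a with _ | a <;> rcases b with _ | b
  · simp [wronskian]
  · simp [wronskian]
  · simp [wronskian]
    ring
  · simp only [wronskian, derivative_X_pow, C_sub, Nat.add_sub_cancel,
      show a + 1 + (b + 1) - 1 = a + b + 1 by omega]
    ring

theorem Polynomial.exists_finset_gcd_eq_C_mul {ι K : Type*} [Field K] [DecidableEq K]
    {s : Finset ι} {f : ι → K[X]} {P : K[X]} {i : ι} {c : K} (hi : i ∈ s) (hc : c ≠ 0)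
    (hfi : f i = C c * P) (hdvd : ∀ j ∈ s, P ∣ f j) :
    ∃ c' : K, c' ≠ 0 ∧ s.gcd f = C c' * P := by
  have hP_dvd : P ∣ s.gcd f := Finset.dvd_gcd hdvd
  have hdvd_P : s.gcd f ∣ P :=
    (isUnit_C.2 hc.isUnit).dvd_mul_left.1 (hfi ▸ Finset.gcd_dvd hi)
  obtain ⟨u, hu⟩ := associated_of_dvd_dvd hP_dvd hdvd_P
  obtain ⟨c', hc', hCc'⟩ := Polynomial.isUnit_iff.1 u.isUnit
  exact ⟨c', hc'.ne_zero, by rw [← hu, ← hCc', mul_comm]⟩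

theorem minor4_eq_wronskian (F : Fin 4 → ℂ[X]) (i j : Fin 4) :
    minor4 F i j = wronskian (F i) (F j) := by
  rw [minor4, wronskian, mul_comm (F j)]

theorem minor4_X_pow (e : Fin 4 → ℕ) (i j : Fin 4) :
    minor4 (fun k => X ^ e k) i j = C ((e j : ℂ) - e i) * X ^ (e i + e j - 1) := by
  rw [minor4_eq_wronskian, wronskian_X_pow]

theorem minor4_monomialCurve (p q : ℕ) :
    let F : Fin 4 → ℂ[X] := ![1, X ^ p, X ^ q, X ^ (p + q)]
    minor4 F 0 1 = C (p : ℂ) * X ^ (p - 1) ∧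
    minor4 F 0 2 = C (q : ℂ) * X ^ (q - 1) ∧
    minor4 F 0 3 = C ((p : ℂ) + q) * X ^ (p + q - 1) ∧
    minor4 F 1 2 = C ((q : ℂ) - p) * X ^ (p + q - 1) ∧
    minor4 F 1 3 = C (q : ℂ) * X ^ (2 * p + q - 1) ∧
    minor4 F 2 3 = C (p : ℂ) * X ^ (p + 2 * q - 1) := by
  have hF : ![1, X ^ p, X ^ q, X ^ (p + q)] = fun k => (X : ℂ[X]) ^ ![0, p, q, p + q] k := by
    ext1 k; fin_cases k <;> simp
  simp only [hF, minor4_X_pow]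
  refine ⟨?_, ?_, ?_, ?_, ?_, ?_⟩ <;> congr 2 <;> simp <;> omega

theorem pairs4_eq : pairs4 = {(0, 1), (0, 2), (0, 3), (1, 2), (1, 3), (2, 3)} := by
  decide

def antidiagForm {R : Type*} [Neg R] [Zero R] (a b : R) : Matrix (Fin 4) (Fin 4) R :=
  !![0, 0, 0, a; 0, 0, b, 0; 0, -b, 0, 0; -a, 0, 0, 0]

theorem transpose_antidiagForm {R : Type*} [CommRing R] (a b : R) :
    (antidiagForm a b)ᵀ = -antidiagForm a b := by
  ext i j
  fin_cases i <;> fin_cases j <;> simp [antidiagForm]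

theorem det_antidiagForm {R : Type*} [CommRing R] (a b : R) :
    (antidiagForm a b).det = (a * b) ^ 2 := by
  simp [antidiagForm, Matrix.det_succ_row_zero, Fin.sum_univ_succ, Fin.succAbove]
  ring

theorem isContactCurve_antidiagForm_iff (a b : ℂ) (F : Fin 4 → ℂ[X]) :
    IsContactCurve (antidiagForm a b) F ↔ C a * minor4 F 0 3 + C b * minor4 F 1 2 = 0 := by
  rw [IsContactCurve, ← pairs4, pairs4_eq]
  simp [antidiagForm]

/-- Rational contact curves of every degree: `(1, X^p, X^q, X^{p+q})` with 
`0 < p < q` is a contact curve for the nondegenerate alternating form 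
`(p−q) ξ₀∧ξ₃ + (p+q) ξ₁∧ξ₂`, with explicitly given minors, whose gcd is 
`X^{p−1}` up to a nonzero constant and whose maximal degree is `p + 2q − 1`. -/
theorem rational_contact_curves_all_degrees (p q : ℕ) (hp : 0 < p) (hpq : p < q)
    (F : Fin 4 → ℂ[X]) (hF : F = ![1, X ^ p, X ^ q, X ^ (p + q)])
    (B : Matrix (Fin 4) (Fin 4) ℂ)
    (hB : B = !![0, 0, 0, (p : ℂ) - q;
                 0, 0, (p : ℂ) + q, 0;
                 0, -((p : ℂ) + q), 0, 0;
                 (q : ℂ) - p, 0, 0, 0]) :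
    (Bᵀ = -B ∧ B.det ≠ 0 ∧ IsContactCurve B F) ∧
    minor4 F 0 1 = C (p : ℂ) * X ^ (p - 1) ∧
    minor4 F 0 2 = C (q : ℂ) * X ^ (q - 1) ∧
    minor4 F 0 3 = C ((p : ℂ) + q) * X ^ (p + q - 1) ∧
    minor4 F 1 2 = C ((q : ℂ) - p) * X ^ (p + q - 1) ∧
    minor4 F 1 3 = C (q : ℂ) * X ^ (2 * p + q - 1) ∧
    minor4 F 2 3 = C (p : ℂ) * X ^ (p + 2 * q - 1) ∧
    (∃ c : ℂ, c ≠ 0 ∧ pairs4.gcd (fun r => minor4 F r.1 r.2) = C c * X ^ (p - 1)) ∧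
    pairs4.sup (fun r => (minor4 F r.1 r.2).natDegree) = p + 2 * q - 1 := by
  have hp0 : (p : ℂ) ≠ 0 := by exact_mod_cast hp.ne'
  have hq0 : (q : ℂ) ≠ 0 := by exact_mod_cast (hp.trans hpq).ne'
  have hpq0 : (p : ℂ) + q ≠ 0 := by exact_mod_cast (by omega : p + q ≠ 0)
  have hpq_ne : (p : ℂ) ≠ q := by exact_mod_cast hpq.ne
  have hB' : B = antidiagForm ((p : ℂ) - q) ((p : ℂ) + q) := by rw [hB, antidiagForm, neg_sub]
  subst hF
  obtain ⟨m01, m02, m03, m12, m13, m23⟩ := minor4_monomialCurve p q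
  refine ⟨⟨?_, ?_, ?_⟩, m01, m02, m03, m12, m13, m23, ?_, ?_⟩
  · rw [hB', transpose_antidiagForm]
  · rw [hB', det_antidiagForm]
    exact pow_ne_zero 2 (mul_ne_zero (sub_ne_zero.2 hpq_ne) hpq0)
  · rw [hB', isContactCurve_antidiagForm_iff, m03, m12]
    simp only [map_sub, map_add]
    ring
  · refine exists_finset_gcd_eq_C_mul (i := (0, 1)) (by decide) hp0 m01 ?_
    simp only [pairs4_eq, Finset.mem_insert, Finset.mem_singleton, forall_eq_or_imp, forall_eq,
      m01, m02, m03, m12, m13, m23]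
    refine ⟨?_, ?_, ?_, ?_, ?_, ?_⟩ <;> exact dvd_mul_of_dvd_right (pow_dvd_pow X (by omega)) _
  · simp only [pairs4_eq, Finset.sup_insert, Finset.sup_singleton, m01, m02, m03, m12, m13, m23,
      natDegree_C_mul_X_pow _ _ hp0, natDegree_C_mul_X_pow _ _ hq0, natDegree_C_mul_X_pow _ _ hpq0,
      natDegree_C_mul_X_pow _ _ (sub_ne_zero.2 hpq_ne.symm)]
    omega
end
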